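/- arXiv:2202.00461 — 6 statements merged into one kernel-verified Lean document; each statement's English description precedes it below -/
import Mathlib

section
/- Let n be a positive integer and S a sequence over Z/nZ. Then S is a T_n-weighted zero-sum sequence if and only if for every prime p with p^r exactly dividing n, the image S^{(p)} of S under the natural map Z/nZ → Z/p^rZ is a T_{p^r}-weighted zero-sum sequence. -/
open Finset

open scoped Classical

/-- `Tset n` is the set of cubes of units in `ZMod n`. -/
def Tset (n : ℕ) : Set (ZMod n) := {x | ∃ u : (ZMod n)ˣ, ((u : ZMod n)) ^ 3 = x}

/-- A family `x : ι → ZMod n` has a nonempty `A`-weighted zero-sum subsequence. -/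
def HasWZS {n : ℕ} {ι : Type} (A : Set (ZMod n)) (x : ι → ZMod n) : Prop :=
  ∃ I : Finset ι, I.Nonempty ∧ ∃ a : ι → ZMod n, (∀ i ∈ I, a i ∈ A) ∧ ∑ i ∈ I, a i * x i = 0

/-- The weighted Davenport constant `D_A(ZMod n)`. -/
noncomputable def DavA (n : ℕ) (A : Set (ZMod n)) : ℕ :=
  sInf {ℓ : ℕ | 0 < ℓ ∧ ∀ x : Fin ℓ → ZMod n, HasWZS A x}

/-- A family has an `A`-weighted zero-sum subsequence of length exactly `m`. -/
def HasWZSLen {n : ℕ} {ι : Type} (A : Set (ZMod n)) (x : ι → ZMod n) (m : ℕ) : Prop :=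
  ∃ I : Finset ι, I.card = m ∧ ∃ a : ι → ZMod n, (∀ i ∈ I, a i ∈ A) ∧ ∑ i ∈ I, a i * x i = 0

/-- The constant `E_A(ZMod n)`. -/
noncomputable def EA (n : ℕ) (A : Set (ZMod n)) : ℕ :=
  sInf {ℓ : ℕ | 0 < ℓ ∧ ∀ x : Fin ℓ → ZMod n, HasWZSLen A x n}

/-- An `A`-extremal sequence: length `D_A - 1` with no nonempty `A`-weighted zero-sum
subsequence. -/
def IsExtremal {n : ℕ} {ι : Type} [Fintype ι] (A : Set (ZMod n)) (x : ι → ZMod n) : Prop :=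
  Fintype.card ι + 1 = DavA n A ∧ ¬ HasWZS A x

/-- `Omega n` is the number of prime factors of `n` counted with multiplicity. -/
def Omega (n : ℕ) : ℕ := n.primeFactorsList.length


lemma tset_map {n d : ℕ} (f : ZMod n →+* ZMod d) {x : ZMod n} (hx : x ∈ Tset n) :
    f x ∈ Tset d := by
  obtain ⟨u, hu⟩ := hx
  exact ⟨Units.map f.toMonoidHom u, by simp [← hu, ← map_pow]⟩

lemma solv_of_subsingleton {n : ℕ} [Subsingleton (ZMod n)] {k : ℕ} (x : Fin k → ZMod n) :
    ∃ a : Fin k → ZMod n, (∀ i, a i ∈ Tset n) ∧ ∑ i, a i * x i = 0 :=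
  ⟨fun _ => 1, fun _ => ⟨1, by simp⟩, Subsingleton.elim _ _⟩

lemma crt_combine {q m n : ℕ} (hqm : q * m = n) (hcop : Nat.Coprime q m)
    (hqd : q ∣ n) (hmd : m ∣ n) {k : ℕ} (x : Fin k → ZMod n)
    (hq : ∃ a : Fin k → ZMod q, (∀ i, a i ∈ Tset q) ∧
      ∑ i, a i * ZMod.castHom hqd (ZMod q) (x i) = 0)
    (hm : ∃ a : Fin k → ZMod m, (∀ i, a i ∈ Tset m) ∧
      ∑ i, a i * ZMod.castHom hmd (ZMod m) (x i) = 0) :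
    ∃ a : Fin k → ZMod n, (∀ i, a i ∈ Tset n) ∧ ∑ i, a i * x i = 0 := by
  subst hqm
  obtain ⟨aq, haq, hsq⟩ := hq
  obtain ⟨am, ham, hsm⟩ := hm
  let e := ZMod.chineseRemainder hcop
  have hfst : ∀ y : ZMod (q * m), (e y).1 = ZMod.castHom hqd (ZMod q) y := fun y =>
    RingHom.congr_fun
      (RingHom.ext_zmod ((RingHom.fst (ZMod q) (ZMod m)).comp (e : ZMod (q*m) →+* ZMod q × ZMod m))
        (ZMod.castHom hqd (ZMod q))) y
  have hsnd : ∀ y : ZMod (q * m), (e y).2 = ZMod.castHom hmd (ZMod m) y := fun y =>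
    RingHom.congr_fun
      (RingHom.ext_zmod ((RingHom.snd (ZMod q) (ZMod m)).comp (e : ZMod (q*m) →+* ZMod q × ZMod m))
        (ZMod.castHom hmd (ZMod m))) y
  refine ⟨fun i => e.symm (aq i, am i), fun i => ?_, ?_⟩
  · obtain ⟨u, hu⟩ := haq i
    obtain ⟨v, hv⟩ := ham i
    refine ⟨Units.map e.symm.toRingHom.toMonoidHom
      ⟨((u : ZMod q), (v : ZMod m)), ((↑u⁻¹ : ZMod q), (↑v⁻¹ : ZMod m)),
        by simp [Prod.ext_iff], by simp [Prod.ext_iff]⟩, ?_⟩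
    show (e.symm (((u : ZMod q), (v : ZMod m)) : ZMod q × ZMod m)) ^ 3 = e.symm (aq i, am i)
    rw [← map_pow]
    congr 1
    rw [Prod.pow_mk, hu, hv]
  · apply e.injective
    rw [map_sum, map_zero]
    simp only [map_mul, RingEquiv.apply_symm_apply]
    rw [Prod.ext_iff]
    constructor
    · rw [Prod.fst_sum, Prod.fst_zero, ← hsq]
      exact Finset.sum_congr rfl fun i _ => by rw [Prod.fst_mul, hfst]
    · rw [Prod.snd_sum, Prod.snd_zero, ← hsm]
      exact Finset.sum_congr rfl fun i _ => by rw [Prod.snd_mul, hsnd]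

lemma transfer {n d : ℕ} (hdvd : d ∣ n) (hcop : Nat.Coprime d (n / d)) {k : ℕ}
    {x : Fin k → ZMod n}
    (H : ∀ p r : ℕ, p.Prime → ∀ (h : p ^ r ∣ n), ¬ p ^ (r + 1) ∣ n →
      ∃ a : Fin k → ZMod (p ^ r), (∀ i, a i ∈ Tset (p ^ r)) ∧
        ∑ i, a i * ZMod.castHom h (ZMod (p ^ r)) (x i) = 0)
    (p r : ℕ) (hp : p.Prime) (h : p ^ r ∣ d) (h2 : ¬ p ^ (r + 1) ∣ d) :
    ∃ a : Fin k → ZMod (p ^ r), (∀ i, a i ∈ Tset (p ^ r)) ∧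
      ∑ i, a i * ZMod.castHom h (ZMod (p ^ r)) (ZMod.castHom hdvd (ZMod d) (x i)) = 0 := by
  rcases Nat.eq_zero_or_pos r with rfl | hr
  · haveI : Subsingleton (ZMod (p ^ 0)) := by rw [pow_zero]; infer_instance
    exact solv_of_subsingleton _
  · have hpd : p ∣ d := dvd_trans (dvd_pow_self p hr.ne') h
    have hc : Nat.Coprime (p ^ (r + 1)) (n / d) :=
      Nat.Coprime.pow_left _ (Nat.Coprime.coprime_dvd_left hpd hcop)
    have h2' : ¬ p ^ (r + 1) ∣ n := by
      intro hcon
      exact h2 (hc.dvd_of_dvd_mul_right (by rwa [Nat.mul_div_cancel' hdvd]))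
    obtain ⟨a, ha, hs⟩ := H p r hp (h.trans hdvd) h2'
    refine ⟨a, ha, ?_⟩
    have hco : ∀ y : ZMod n, ZMod.castHom h (ZMod (p ^ r)) (ZMod.castHom hdvd (ZMod d) y) =
        ZMod.castHom (h.trans hdvd) (ZMod (p ^ r)) y := fun y =>
      RingHom.congr_fun (ZMod.castHom_comp h hdvd) y
    simp only [hco]
    exact hs

lemma main_back (n : ℕ) : n ≠ 0 → ∀ (k : ℕ) (x : Fin k → ZMod n),
    (∀ p r : ℕ, p.Prime → ∀ (h : p ^ r ∣ n), ¬ p ^ (r + 1) ∣ n →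
      ∃ a : Fin k → ZMod (p ^ r), (∀ i, a i ∈ Tset (p ^ r)) ∧
        ∑ i, a i * ZMod.castHom h (ZMod (p ^ r)) (x i) = 0) →
    ∃ a : Fin k → ZMod n, (∀ i, a i ∈ Tset n) ∧ ∑ i, a i * x i = 0 := by
  induction n using Nat.strong_induction_on with
  | _ n IH =>
    intro hn k x H
    rcases eq_or_ne n 1 with rfl | hn1
    · exact solv_of_subsingleton x
    · set p := n.minFac with hpdef
      have hp : p.Prime := Nat.minFac_prime hn1
      set r := n.factorization p with hrdef
      have hr : 0 < r := hp.factorization_pos_of_dvd hn (Nat.minFac_dvd n)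
      set q := p ^ r with hqdef
      set m := n / q with hmdef
      have hqd : q ∣ n := Nat.ordProj_dvd n p
      have hqm : q * m = n := Nat.mul_div_cancel' hqd
      have hm0 : m ≠ 0 := by
        intro h0
        rw [h0, mul_zero] at hqm
        exact hn hqm.symm
      have hq2 : 1 < q := Nat.one_lt_pow hr.ne' hp.one_lt
      have hmlt : m < n := by
        calc m = 1 * m := (one_mul m).symm
        _ < q * m := by exact (Nat.mul_lt_mul_right (Nat.pos_of_ne_zero hm0)).mpr hq2
        _ = n := hqm
      have hcop : Nat.Coprime q m := Nat.Coprime.pow_left r (Nat.coprime_ordCompl hp hn)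
      have hmd : m ∣ n := Nat.div_dvd_of_dvd hqd
      have hndivm : n / m = q := Nat.div_div_self hqd hn
      have hcopm : Nat.Coprime m (n / m) := by rw [hndivm]; exact hcop.symm
      have hq : ∃ a : Fin k → ZMod q, (∀ i, a i ∈ Tset q) ∧
          ∑ i, a i * ZMod.castHom hqd (ZMod q) (x i) = 0 :=
        H p r hp hqd (Nat.pow_succ_factorization_not_dvd hn hp)
      have hm : ∃ a : Fin k → ZMod m, (∀ i, a i ∈ Tset m) ∧
          ∑ i, a i * ZMod.castHom hmd (ZMod m) (x i) = 0 := by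
        refine IH m hmlt hm0 k (fun i => ZMod.castHom hmd (ZMod m) (x i)) ?_
        exact transfer hmd hcopm H
      exact crt_combine hqm hcop hqd hmd x hq hm

theorem stmt3 (n : ℕ) (hn : 0 < n) (k : ℕ) (x : Fin k → ZMod n) :
    (∃ a : Fin k → ZMod n, (∀ i, a i ∈ Tset n) ∧ ∑ i, a i * x i = 0) ↔
      ∀ (p r : ℕ), p.Prime → ∀ (hd : p ^ r ∣ n), ¬ p ^ (r + 1) ∣ n →
        ∃ a : Fin k → ZMod (p ^ r), (∀ i, a i ∈ Tset (p ^ r)) ∧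
          ∑ i, a i * (ZMod.castHom hd (ZMod (p ^ r))) (x i) = 0 := by
  constructor
  · rintro ⟨a, ha, hs⟩ p r hp hd hnd
    refine ⟨fun i => ZMod.castHom hd (ZMod (p ^ r)) (a i), fun i => tset_map _ (ha i), ?_⟩
    have : ∑ i, ZMod.castHom hd (ZMod (p ^ r)) (a i) * ZMod.castHom hd (ZMod (p ^ r)) (x i)
        = ZMod.castHom hd (ZMod (p ^ r)) (∑ i, a i * x i) := by
      rw [map_sum]
      exact Finset.sum_congr rfl fun i _ => (map_mul _ _ _).symm
    rw [this, hs, map_zero]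
  · intro H
    exact main_back n hn.ne' k x H
end

section
/- Let n = n_1 n_2 and let A ⊆ Z/nZ, A_1 ⊆ Z/n_1Z, A_2 ⊆ Z/n_2Z be nonempty sets such that the image of A under the natural map Z/nZ → Z/n_iZ is contained in A_i for i = 1, 2. Then D_A(Z/nZ) ≥ D_{A_1}(Z/n_1Z) + D_{A_2}(Z/n_2Z) − 1. -/
open Finset

open scoped Classical

/-!
Take zero-sum free sequences `x1` over `ZMod n1` and `x2` over `ZMod n2` of lengths
`D_{A1} - 1` and `D_{A2} - 1`, lift them to `ZMod n`, and multiply the lift of `x2` by `n1`.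
The concatenation is `A`-weighted zero-sum free, so `D_A` exceeds its length
`D_{A1} + D_{A2} - 2`.
-/

lemma HasWZS.of_comp_injective {n : ℕ} {ι κ : Type} {A : Set (ZMod n)} {x : κ → ZMod n}
    {f : ι → κ} (hf : Function.Injective f) (h : HasWZS A (x ∘ f)) : HasWZS A x := by
  obtain ⟨I, hI, a, ha, hsum⟩ := h
  refine ⟨I.map ⟨f, hf⟩, hI.map, Function.extend f a 0, ?_, ?_⟩
  · simpa [hf.extend_apply] using ha
  · simpa [hf.extend_apply] using hsum

/-- By Erdős–Ginzburg–Ziv, `2n - 1` terms already contain `n` terms summing to zero, which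
stay a zero sum under any constant weight. -/
lemma hasWZS_of_two_mul_sub_one_le_card {n : ℕ} [NeZero n] {A : Set (ZMod n)} (hA : A.Nonempty)
    {ι : Type} [Fintype ι] (x : ι → ZMod n) (hcard : 2 * n - 1 ≤ Fintype.card ι) :
    HasWZS A x := by
  obtain ⟨c, hc⟩ := hA
  obtain ⟨I, -, hIcard, hsum⟩ := ZMod.erdos_ginzburg_ziv (s := univ) x hcard
  refine ⟨I, card_pos.1 (hIcard ▸ Nat.pos_of_neZero n), fun _ => c, fun _ _ => hc, ?_⟩
  rw [← mul_sum, hsum, mul_zero]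

lemma forall_hasWZS_fin_davA {n : ℕ} [NeZero n] {A : Set (ZMod n)} (hA : A.Nonempty)
    (x : Fin (DavA n A) → ZMod n) : HasWZS A x := by
  have hn := Nat.pos_of_neZero n
  refine (Nat.sInf_mem (s := {ℓ | 0 < ℓ ∧ ∀ x : Fin ℓ → ZMod n, HasWZS A x})
    ⟨2 * n - 1, by omega, fun y => ?_⟩).2 x
  exact hasWZS_of_two_mul_sub_one_le_card hA y (by simp)

lemma card_lt_davA_of_not_hasWZS {n : ℕ} [NeZero n] {A : Set (ZMod n)} (hA : A.Nonempty)
    {ι : Type} [Fintype ι] {x : ι → ZMod n} (hx : ¬ HasWZS A x) :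
    Fintype.card ι < DavA n A := by
  by_contra! hle
  let f : Fin (DavA n A) → ι := (Fintype.equivFin ι).symm ∘ Fin.castLE hle
  have hf : Function.Injective f :=
    (Fintype.equivFin ι).symm.injective.comp (Fin.castLE_injective hle)
  exact hx ((forall_hasWZS_fin_davA hA (x ∘ f)).of_comp_injective hf)

lemma exists_not_hasWZS_fin_davA_sub_one (n : ℕ) (A : Set (ZMod n)) :
    ∃ x : Fin (DavA n A - 1) → ZMod n, ¬ HasWZS A x := by
  rcases Nat.eq_zero_or_pos (DavA n A - 1) with h0 | hpos
  · rw [h0]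
    exact ⟨Fin.elim0, by rintro ⟨_, ⟨i, _⟩, _⟩; exact i.elim0⟩
  · have hmem : DavA n A - 1 ∉ {ℓ : ℕ | 0 < ℓ ∧ ∀ x : Fin ℓ → ZMod n, HasWZS A x} :=
      Nat.notMem_of_lt_sInf (by unfold DavA at hpos ⊢; omega)
    simpa [hpos] using hmem

lemma ZMod.castHom_eq_zero_of_natCast_mul_eq_zero {m k : ℕ} (hm : m ≠ 0) {z : ZMod (m * k)}
    (hz : (m : ZMod (m * k)) * z = 0) : ZMod.castHom (dvd_mul_left k m) (ZMod k) z = 0 := by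
  obtain ⟨t, rfl⟩ := ZMod.intCast_surjective z
  rw [← Int.cast_natCast, ← Int.cast_mul, ZMod.intCast_zmod_eq_zero_iff_dvd] at hz
  rw [map_intCast, ZMod.intCast_zmod_eq_zero_iff_dvd]
  push_cast at hz
  exact (Int.mul_dvd_mul_iff_left (by exact_mod_cast hm)).1 hz

/-- Reducing mod `m` kills the second part, so a weighted zero sum uses no term of `y1`; what
remains is `m` times a weighted sum of `y2`, which then vanishes mod `k`. -/
theorem not_hasWZS_sumElim_natCast_mul {m k : ℕ} (hm : m ≠ 0) {ι κ : Type}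
    {A : Set (ZMod (m * k))} {A1 : Set (ZMod m)} {A2 : Set (ZMod k)}
    (h1 : ZMod.castHom (dvd_mul_right m k) (ZMod m) '' A ⊆ A1)
    (h2 : ZMod.castHom (dvd_mul_left k m) (ZMod k) '' A ⊆ A2)
    {x1 : ι → ZMod m} {x2 : κ → ZMod k} (hx1 : ¬ HasWZS A1 x1) (hx2 : ¬ HasWZS A2 x2)
    {y1 : ι → ZMod (m * k)} {y2 : κ → ZMod (m * k)}
    (hy1 : ∀ i, ZMod.castHom (dvd_mul_right m k) (ZMod m) (y1 i) = x1 i)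
    (hy2 : ∀ j, ZMod.castHom (dvd_mul_left k m) (ZMod k) (y2 j) = x2 j) :
    ¬ HasWZS A (Sum.elim y1 fun j => (m : ZMod (m * k)) * y2 j) := by
  set π1 := ZMod.castHom (dvd_mul_right m k) (ZMod m)
  set π2 := ZMod.castHom (dvd_mul_left k m) (ZMod k)
  rintro ⟨I, hI, a, ha, hsum⟩
  rw [sum_sum_eq_sum_toLeft_add_sum_toRight] at hsum
  simp only [Sum.elim_inl, Sum.elim_inr] at hsum
  have hleft : I.toLeft = ∅ := by
    refine not_nonempty_iff_eq_empty.1 fun hne => hx1 ⟨I.toLeft, hne, fun i => π1 (a (.inl i)),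
      fun i hi => h1 ⟨_, ha _ (mem_toLeft.1 hi), rfl⟩, ?_⟩
    have hπ1m : π1 m = 0 := by rw [map_natCast, ZMod.natCast_self]
    simpa [map_sum, hy1, hπ1m] using congrArg π1 hsum
  have hright : I.toRight.Nonempty := by
    obtain ⟨i | j, hs⟩ := hI
    · exact absurd (mem_toLeft.2 hs) (by simp [hleft])
    · exact ⟨j, mem_toRight.2 hs⟩
  refine hx2 ⟨I.toRight, hright, fun j => π2 (a (.inr j)),
    fun j hj => h2 ⟨_, ha _ (mem_toRight.1 hj), rfl⟩, ?_⟩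
  rw [hleft, sum_empty, zero_add] at hsum
  have hm_mul : (m : ZMod (m * k)) * ∑ j ∈ I.toRight, a (.inr j) * y2 j = 0 := by
    rw [mul_sum, ← hsum]
    exact sum_congr rfl fun j _ => mul_left_comm _ _ _
  have hπ2 : π2 (∑ j ∈ I.toRight, a (.inr j) * y2 j) = 0 :=
    ZMod.castHom_eq_zero_of_natCast_mul_eq_zero hm hm_mul
  simpa only [map_sum, map_mul, hy2] using hπ2

theorem stmt4 (n n1 n2 : ℕ) (hn1 : 0 < n1) (hn2 : 0 < n2) (h : n = n1 * n2)
    (A : Set (ZMod n)) (A1 : Set (ZMod n1)) (A2 : Set (ZMod n2))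
    (hA : A.Nonempty)
    (h1 : (ZMod.castHom ⟨n2, h⟩ (ZMod n1)) '' A ⊆ A1)
    (h2 : (ZMod.castHom ⟨n1, by rw [h, mul_comm]⟩ (ZMod n2)) '' A ⊆ A2) :
    DavA n1 A1 + DavA n2 A2 - 1 ≤ DavA n A := by
  subst h
  have : NeZero (n1 * n2) := ⟨(Nat.mul_pos hn1 hn2).ne'⟩
  obtain ⟨x1, hx1⟩ := exists_not_hasWZS_fin_davA_sub_one n1 A1
  obtain ⟨x2, hx2⟩ := exists_not_hasWZS_fin_davA_sub_one n2 A2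
  choose y1 hy1 using fun i => ZMod.ringHom_surjective (ZMod.castHom (dvd_mul_right n1 n2) _) (x1 i)
  choose y2 hy2 using fun j => ZMod.ringHom_surjective (ZMod.castHom (dvd_mul_left n2 n1) _) (x2 j)
  have hcard := card_lt_davA_of_not_hasWZS hA
    (not_hasWZS_sumElim_natCast_mul hn1.ne' h1 h2 hx1 hx2 hy1 hy2)
  simp only [Fintype.card_sum, Fintype.card_fin] at hcard
  omega
end

section
/- Let p be an odd prime with p ∉ {7, 13}, and let S = x_1,…,x_m be a sequence over Z/pZ such that at least three terms of S are units in Z/pZ. Then there exist a_1,…,a_m ∈ T_p such that a_1 x_1 + … + a_m x_m ≡ 0 (mod p). -/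
open Finset

open scoped Classical

/-!
All terms outside three units `X, Y, Z` of the sequence get weight `1`, so it suffices that every
`t` is of the form `a³X + b³Y + c³Z` with `a, b, c` units. Taking `c = ±1` with `t - c³Z ≠ 0`
(possible as `p` is odd), it remains to write a nonzero `s` as `u³X + v³Y`. When `3 ∤ p - 1`
every unit is a cube. Otherwise let `χ` be a cubic character: `∑ⱼ χʲ(w)` vanishes unless `w` is
a nonzero cube, so if there were no representation then
`∑ₛ (∑ⱼ χʲ(s/X)) (∑ₖ χᵏ((1 - s)/Y)) = 0`. Expanding in Jacobi sums, this equals `p - 2` plus six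
terms of modulus `1` and two of modulus `√p`, so `p - 2 ≤ 6 + 2√p`, i.e. `p ≤ 16`; the primes
`p ≡ 1 mod 3` below `17` are `7` and `13`.
-/

namespace MulChar

theorem sum_range_pow_apply_eq_zero {R R' : Type*} [CommMonoid R] [CommRing R'] [IsDomain R']
    {χ : MulChar R R'} {n : ℕ} (hχ : χ ^ n = 1) {a : R} (ha : χ a ≠ 1) :
    ∑ j ∈ range n, (χ ^ j) a = 0 := by
  by_cases hu : IsUnit a
  · lift a to Rˣ using hu
    simp only [pow_apply_coe]
    have hpow : χ a ^ n = 1 := by rw [← pow_apply_coe, hχ, one_apply_coe]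
    have := geom_sum_mul (χ a) n
    rw [hpow, sub_self] at this
    exact (mul_eq_zero.mp this).resolve_right (sub_ne_zero.mpr ha)
  · exact sum_eq_zero fun j _ ↦ map_nonunit _ hu

theorem norm_apply_unit {R : Type*} [CommRing R] [Fintype Rˣ] (χ : MulChar R ℂ) (u : Rˣ) :
    ‖χ u‖ = 1 :=
  Complex.norm_eq_one_of_mem_rootsOfUnity (χ.apply_mem_rootsOfUnity u)

end MulChar

theorem norm_cubic_error_term_le {c d J₁ J₂ : ℂ} (hc : ‖c‖ = 1) (hd : ‖d‖ = 1) :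
    ‖-(c + c ^ 2 + d + d ^ 2 + c * d ^ 2 + c ^ 2 * d) + c * d * J₁ + c ^ 2 * d ^ 2 * J₂‖ ≤
      6 + ‖J₁‖ + ‖J₂‖ := by
  have h6 : ‖c + c ^ 2 + d + d ^ 2 + c * d ^ 2 + c ^ 2 * d‖ ≤ 6 := by
    rw [show c + c ^ 2 + d + d ^ 2 + c * d ^ 2 + c ^ 2 * d =
      (c + c ^ 2 + d) + (d ^ 2 + c * d ^ 2 + c ^ 2 * d) by ring]
    have := norm_add_le (c + c ^ 2 + d) (d ^ 2 + c * d ^ 2 + c ^ 2 * d)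
    have h₁ := norm_add₃_le (a := c) (b := c ^ 2) (c := d)
    have h₂ := norm_add₃_le (a := d ^ 2) (b := c * d ^ 2) (c := c ^ 2 * d)
    simp only [norm_mul, norm_pow, hc, hd] at h₁ h₂
    linarith
  calc _ ≤ ‖c + c ^ 2 + d + d ^ 2 + c * d ^ 2 + c ^ 2 * d‖ + ‖c * d * J₁‖
        + ‖c ^ 2 * d ^ 2 * J₂‖ := by
        simpa only [norm_neg] using
          norm_add₃_le (a := -(c + c ^ 2 + d + d ^ 2 + c * d ^ 2 + c ^ 2 * d))
    _ ≤ 6 + ‖J₁‖ + ‖J₂‖ := by simpa [hc, hd] using h6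

section FiniteField

variable {F : Type*} [Field F] [Fintype F]

theorem MulChar.exists_pow_orderOf_eq_of_apply_eq_one {R : Type*} [CommRing R] [Nontrivial R]
    {χ : MulChar F R} {a : F} (ha : χ a = 1) : ∃ u : Fˣ, (u : F) ^ orderOf χ = a := by
  obtain ⟨g, hg⟩ := IsCyclic.exists_generator (α := Fˣ)
  have hunit : IsUnit a := by
    by_contra h
    rw [map_nonunit χ h] at ha
    exact zero_ne_one ha
  obtain ⟨k, hk⟩ : ∃ k : ℕ, g ^ k = hunit.unit :=
    (Submonoid.mem_powers_iff _ g).mp <|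
      (isOfFinOrder_of_finite g).mem_powers_iff_mem_zpowers.mpr (hg _)
  have hχk : χ ^ k = 1 := by
    rw [eq_iff hg, pow_apply_coe, one_apply_coe, ← map_pow, ← Units.val_pow_eq_pow_val, hk,
      IsUnit.unit_spec, ha]
  obtain ⟨l, rfl⟩ := orderOf_dvd_of_pow_eq_one hχk
  refine ⟨g ^ l, ?_⟩
  rw [← Units.val_pow_eq_pow_val, ← pow_mul, mul_comm, hk, IsUnit.unit_spec]

theorem norm_jacobiSum {χ ψ : MulChar F ℂ} (hχ : χ ≠ 1) (hψ : ψ ≠ 1) (hχψ : χ * ψ ≠ 1) :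
    ‖jacobiSum χ ψ‖ = √(Fintype.card F) := by
  have hchar : ringChar ℂ ≠ ringChar F := by
    rw [ringChar.eq_zero]
    exact (CharP.char_is_prime F (ringChar F)).ne_zero.symm
  have hconj : starRingEnd ℂ (jacobiSum χ ψ) = jacobiSum χ⁻¹ ψ⁻¹ := by
    rw [← jacobiSum_ringHomComp, ← MulChar.star_eq_inv, ← MulChar.star_eq_inv]
    rfl
  rw [Complex.norm_def]
  congr 1
  apply Complex.ofReal_injective
  rw [← Complex.mul_conj, hconj, jacobiSum_mul_jacobiSum_inv hchar hχ hψ hχψ,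
    Complex.ofReal_natCast]

theorem sum_mul_sum_range_pow_apply_eq_sum_jacobiSum {R : Type*} [CommRing R]
    (χ : MulChar F R) (n : ℕ) (a b : F) :
    ∑ s, (∑ j ∈ range n, (χ ^ j) (a * s)) * ∑ k ∈ range n, (χ ^ k) (b * (1 - s)) =
      ∑ j ∈ range n, ∑ k ∈ range n, (χ ^ j) a * (χ ^ k) b * jacobiSum (χ ^ j) (χ ^ k) := by
  simp only [map_mul, sum_mul_sum]
  simp only [jacobiSum, mul_sum]
  rw [sum_comm]
  refine sum_congr rfl fun j _ ↦ ?_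
  rw [sum_comm]
  exact sum_congr rfl fun k _ ↦ sum_congr rfl fun s _ ↦ by ring

theorem sum_range_three_mul_jacobiSum_eq {R : Type*} [CommRing R] [IsDomain R]
    {χ : MulChar F R} (hχ : χ ^ 3 = 1) (hχ1 : χ ≠ 1) {a b : F} (ha : a ≠ 0) (hb : b ≠ 0) :
    ∑ j ∈ range 3, ∑ k ∈ range 3, (χ ^ j) a * (χ ^ k) b * jacobiSum (χ ^ j) (χ ^ k) =
      (Fintype.card F - 2) + (-(χ a + χ a ^ 2 + χ b + χ b ^ 2 + χ a * χ b ^ 2 + χ a ^ 2 * χ b)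
        + χ a * χ b * jacobiSum χ χ + χ a ^ 2 * χ b ^ 2 * jacobiSum (χ ^ 2) (χ ^ 2)) := by
  have hχ2 : χ ^ 2 ≠ 1 := fun h ↦ hχ1 (by simpa [pow_succ, h] using hχ)
  have hinv : χ ^ 2 = χ⁻¹ := eq_inv_of_mul_eq_one_left (by rw [← pow_succ, hχ])
  have hneg : χ (-1) = 1 := MulChar.val_neg_one_eq_one_of_odd_order (by decide) hχ
  have h12 : jacobiSum χ (χ ^ 2) = -1 := by
    rw [hinv, jacobiSum_nontrivial_inv hχ1, hneg]
  have h21 : jacobiSum (χ ^ 2) χ = -1 := by rw [jacobiSum_comm, h12]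
  lift a to Fˣ using ha.isUnit
  lift b to Fˣ using hb.isUnit
  simp only [sum_range_succ, sum_range_zero, zero_add, pow_zero, pow_one, MulChar.pow_apply_coe,
    jacobiSum_one_one, jacobiSum_one_nontrivial hχ1, jacobiSum_one_nontrivial hχ2,
    jacobiSum_comm _ (1 : MulChar F R), h12, h21]
  ring

theorem sum_mul_sum_range_pow_apply_eq_zero {R : Type*} [CommRing R] [IsDomain R]
    {χ : MulChar F R} {n : ℕ} (hord : orderOf χ = n) {α β : F}
    (hno : ∀ u v : Fˣ, (u : F) ^ n * α + (v : F) ^ n * β ≠ 1) :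
    ∑ s, (∑ j ∈ range n, (χ ^ j) (α⁻¹ * s)) * ∑ k ∈ range n, (χ ^ k) (β⁻¹ * (1 - s)) = 0 := by
  have hχn : χ ^ n = 1 := hord ▸ pow_orderOf_eq_one χ
  refine sum_eq_zero fun s _ ↦ ?_
  by_cases h₁ : χ (α⁻¹ * s) = 1
  · by_cases h₂ : χ (β⁻¹ * (1 - s)) = 1
    · obtain ⟨u, hu⟩ := MulChar.exists_pow_orderOf_eq_of_apply_eq_one h₁
      obtain ⟨v, hv⟩ := MulChar.exists_pow_orderOf_eq_of_apply_eq_one h₂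
      rw [hord] at hu hv
      have hα : α ≠ 0 := by rintro rfl; simp [MulChar.map_zero] at h₁
      have hβ : β ≠ 0 := by rintro rfl; simp [MulChar.map_zero] at h₂
      refine absurd ?_ (hno u v)
      rw [hu, hv]
      field_simp
      ring
    · rw [MulChar.sum_range_pow_apply_eq_zero hχn h₂, mul_zero]
  · rw [MulChar.sum_range_pow_apply_eq_zero hχn h₁, zero_mul]

theorem exists_cube_mul_add_cube_mul_eq_one (hq : 17 ≤ Fintype.card F)
    (h3 : 3 ∣ Fintype.card F - 1) {α β : F} (hα : α ≠ 0) (hβ : β ≠ 0) :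
    ∃ u v : Fˣ, (u : F) ^ 3 * α + (v : F) ^ 3 * β = 1 := by
  by_contra! hno
  obtain ⟨χ, hord⟩ := MulChar.exists_mulChar_orderOf F h3
    (Complex.isPrimitiveRoot_exp 3 (by norm_num))
  have hχ3 : χ ^ 3 = 1 := hord ▸ pow_orderOf_eq_one χ
  have hχ1 : χ ≠ 1 := by rintro rfl; simp at hord
  have hχ2 : χ ^ 2 ≠ 1 := fun h ↦ hχ1 (by simpa [pow_succ, h] using hχ3)
  have hzero := sum_mul_sum_range_pow_apply_eq_zero hord hno
  rw [sum_mul_sum_range_pow_apply_eq_sum_jacobiSum,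
    sum_range_three_mul_jacobiSum_eq hχ3 hχ1 (inv_ne_zero hα) (inv_ne_zero hβ)] at hzero
  have hJ₁ : ‖jacobiSum χ χ‖ = √(Fintype.card F) :=
    norm_jacobiSum hχ1 hχ1 (by rwa [← pow_two])
  have hJ₂ : ‖jacobiSum (χ ^ 2) (χ ^ 2)‖ = √(Fintype.card F) :=
    norm_jacobiSum hχ2 hχ2 (by rwa [← pow_add, pow_succ' χ 3, hχ3, mul_one])
  have hbound := norm_cubic_error_term_le (J₁ := jacobiSum χ χ)
    (J₂ := jacobiSum (χ ^ 2) (χ ^ 2)) (χ.norm_apply_unit (Units.mk0 _ (inv_ne_zero hα)))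
    (χ.norm_apply_unit (Units.mk0 _ (inv_ne_zero hβ)))
  have hle : (Fintype.card F : ℝ) - 2 ≤ ‖(Fintype.card F : ℂ) - 2‖ := by
    simpa using Complex.re_le_norm ((Fintype.card F : ℂ) - 2)
  rw [eq_neg_of_add_eq_zero_left hzero, norm_neg] at hle
  simp only [Units.val_mk0, hJ₁, hJ₂] at hbound
  have hsq := Real.sq_sqrt (Fintype.card F).cast_nonneg
  have hqR : (17 : ℝ) ≤ Fintype.card F := by exact_mod_cast hq
  nlinarith [Real.sqrt_nonneg (Fintype.card F)]

theorem exists_pow_three_eq_of_not_dvd (h3 : ¬ 3 ∣ Fintype.card F - 1) {w : F} (hw : w ≠ 0) :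
    ∃ u : Fˣ, (u : F) ^ 3 = w := by
  have hcop : (Nat.card Fˣ).Coprime 3 := by
    rw [Nat.card_eq_fintype_card, Fintype.card_units]
    exact (Nat.prime_three.coprime_iff_not_dvd.mpr h3).symm
  obtain ⟨u, hu⟩ := (powCoprime hcop).surjective (Units.mk0 w hw)
  exact ⟨u, by rw [← Units.val_pow_eq_pow_val]; exact congrArg Units.val hu⟩

theorem exists_cube_mul_add_cube_mul_eq (h2 : ringChar F ≠ 2) (h7 : Fintype.card F ≠ 7)
    (h13 : Fintype.card F ≠ 13) {X Y s : F} (hX : X ≠ 0) (hY : Y ≠ 0) (hs : s ≠ 0) :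
    ∃ u v : Fˣ, (u : F) ^ 3 * X + (v : F) ^ 3 * Y = s := by
  by_cases h3 : 3 ∣ Fintype.card F - 1
  · have hq : 17 ≤ Fintype.card F := by
      have := FiniteField.odd_card_of_char_ne_two h2
      have := Fintype.one_lt_card (α := F)
      omega
    obtain ⟨u, v, huv⟩ :=
      exists_cube_mul_add_cube_mul_eq_one hq h3 (div_ne_zero hX hs) (div_ne_zero hY hs)
    refine ⟨u, v, ?_⟩
    field_simp at huv
    linear_combination huv
  · have two : (2 : F) ≠ 0 := Ring.two_ne_zero h2
    obtain ⟨u, hu⟩ := exists_pow_three_eq_of_not_dvd h3 (div_ne_zero hs (mul_ne_zero two hX))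
    obtain ⟨v, hv⟩ := exists_pow_three_eq_of_not_dvd h3 (div_ne_zero hs (mul_ne_zero two hY))
    refine ⟨u, v, ?_⟩
    rw [hu, hv]
    field_simp
    ring

theorem exists_cube_mul_add_cube_mul_add_cube_mul_eq (h2 : ringChar F ≠ 2)
    (h7 : Fintype.card F ≠ 7) (h13 : Fintype.card F ≠ 13) {X Y Z : F} (hX : X ≠ 0) (hY : Y ≠ 0)
    (hZ : Z ≠ 0) (t : F) :
    ∃ a b c : Fˣ, (a : F) ^ 3 * X + (b : F) ^ 3 * Y + (c : F) ^ 3 * Z = t := by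
  obtain ⟨c, hc⟩ : ∃ c : Fˣ, t - (c : F) ^ 3 * Z ≠ 0 := by
    by_contra! h
    have h₁ := h 1
    have h₂ := h (-1)
    simp only [Units.val_one, Units.val_neg, one_pow, one_mul, Odd.neg_one_pow (by decide : Odd 3),
      neg_mul, sub_neg_eq_add] at h₁ h₂
    exact mul_ne_zero (Ring.two_ne_zero h2) hZ (by linear_combination h₂ - h₁)
  obtain ⟨a, b, hab⟩ := exists_cube_mul_add_cube_mul_eq h2 h7 h13 hX hY hc
  exact ⟨a, b, c, by linear_combination hab⟩

end FiniteField

theorem exists_forall_mem_sum_mul_eq_zero {R ι : Type*} [CommRing R] [Fintype ι] {A : Set R}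
    (hA : 1 ∈ A) (x : ι → R) {i j k : ι} (hij : i ≠ j) (hik : i ≠ k) (hjk : j ≠ k)
    (h : ∀ t, ∃ a ∈ A, ∃ b ∈ A, ∃ c ∈ A, a * x i + b * x j + c * x k = t) :
    ∃ w : ι → R, (∀ n, w n ∈ A) ∧ ∑ n, w n * x n = 0 := by
  obtain ⟨a, ha, b, hb, c, hc, habc⟩ := h (x i + x j + x k - ∑ n, x n)
  let w n := if n = i then a else if n = j then b else if n = k then c else 1
  have hw : ∀ n, w n * x n = x n + (if n = i then (a - 1) * x i else 0) +
      (if n = j then (b - 1) * x j else 0) + (if n = k then (c - 1) * x k else 0) := by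
    intro n
    by_cases hi : n = i <;> by_cases hj : n = j <;> by_cases hk : n = k <;> simp_all [w] <;> ring
  refine ⟨w, fun n ↦ ?_, ?_⟩
  · by_cases hi : n = i <;> by_cases hj : n = j <;> by_cases hk : n = k <;> simp_all [w]
  · simp only [hw, sum_add_distrib, sum_ite_eq', mem_univ, if_true]
    linear_combination habc

theorem stmt7 (p : ℕ) (hp : p.Prime) (hodd : Odd p) (h7 : p ≠ 7) (h13 : p ≠ 13)
    (m : ℕ) (x : Fin m → ZMod p)
    (h3 : 3 ≤ (Finset.univ.filter fun i => IsUnit (x i)).card) :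
    ∃ a : Fin m → ZMod p, (∀ i, a i ∈ Tset p) ∧ ∑ i, a i * x i = 0 := by
  have := Fact.mk hp
  obtain ⟨i, j, k, hi, hj, hk, hij, hik, hjk⟩ := two_lt_card_iff.mp h3
  simp only [mem_filter, mem_univ, true_and] at hi hj hk
  have h2 : ringChar (ZMod p) ≠ 2 := by
    rw [ZMod.ringChar_zmod_n]
    rintro rfl
    exact absurd hodd (by decide)
  refine exists_forall_mem_sum_mul_eq_zero (A := Tset p) ⟨1, one_pow 3⟩ x hij hik hjk fun t ↦ ?_
  obtain ⟨a, b, c, habc⟩ := exists_cube_mul_add_cube_mul_add_cube_mul_eq h2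
    (by rwa [ZMod.card]) (by rwa [ZMod.card]) hi.ne_zero hj.ne_zero hk.ne_zero t
  exact ⟨_, ⟨a, rfl⟩, _, ⟨b, rfl⟩, _, ⟨c, rfl⟩, habc⟩
end

section
/- Let p^r be an odd prime power and S = x_1,…,x_m a sequence over Z/p^rZ with at least two terms that are units in Z/p^rZ. Then there exist units a_1,…,a_m ∈ (Z/p^rZ)^* such that a_1 x_1 + … + a_m x_m ≡ 0 (mod p^r). -/
open Finset

open scoped Classical

lemma unit_iff_cast (p r : ℕ) (hp : p.Prime) (hr : 1 ≤ r) (a : ZMod (p ^ r)) :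
    IsUnit a ↔ (ZMod.castHom (dvd_pow_self p (by omega : r ≠ 0)) (ZMod p)) a ≠ 0 := by
  haveI : Fact p.Prime := ⟨hp⟩
  haveI : NeZero (p ^ r) := ⟨pow_ne_zero r hp.ne_zero⟩
  have hcast : (ZMod.castHom (dvd_pow_self p (by omega : r ≠ 0)) (ZMod p)) a
      = (a.val : ZMod p) := by
    rw [ZMod.castHom_apply, ← ZMod.natCast_val]
  have ha : a = (a.val : ZMod (p ^ r)) := by rw [ZMod.natCast_val, ZMod.cast_id]
  rw [hcast, Ne, ZMod.natCast_eq_zero_iff]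
  conv_lhs => rw [ha]
  rw [ZMod.isUnit_iff_coprime, Nat.coprime_pow_right_iff (by omega : 0 < r),
    Nat.coprime_comm, hp.coprime_iff_not_dvd]

lemma two_units (p r : ℕ) (hp : p.Prime) (hodd : Odd p) (hr : 1 ≤ r) (t : ZMod (p ^ r)) :
    ∃ u v : ZMod (p ^ r), IsUnit u ∧ IsUnit v ∧ u + v = t := by
  haveI : Fact p.Prime := ⟨hp⟩
  set f := ZMod.castHom (dvd_pow_self p (by omega : r ≠ 0)) (ZMod p) with hf
  have h1 : IsUnit (1 : ZMod (p ^ r)) := isUnit_one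
  by_cases h : IsUnit (t - 1)
  · exact ⟨1, t - 1, h1, h, by ring⟩
  · have hft : f (t - 1) = 0 := by
      by_contra h0
      exact h ((unit_iff_cast p r hp hr _).mpr h0)
    have hp3 : 3 ≤ p := by
      rcases hodd with ⟨k, hk⟩
      have := hp.two_le
      omega
    have h2 : f (2 : ZMod (p ^ r)) ≠ 0 := by
      rw [map_ofNat]
      intro h0
      have : (p : ℕ) ∣ 2 := by
        have := (ZMod.natCast_eq_zero_iff 2 p).mp (by exact_mod_cast h0)
        exact this
      have := Nat.le_of_dvd (by norm_num) this
      omega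
    have hu2 : IsUnit (2 : ZMod (p ^ r)) := (unit_iff_cast p r hp hr _).mpr h2
    have hftv : f (t - 2) ≠ 0 := by
      have : f (t - 2) = f (t - 1) - 1 := by
        simp only [map_sub]
        ring_nf
        rw [map_ofNat, map_one]
        ring
      rw [this, hft]
      intro h0
      have : (1 : ZMod p) = 0 := by linear_combination -h0
      have : (p : ℕ) ∣ 1 := by
        have := (ZMod.natCast_eq_zero_iff 1 p).mp (by exact_mod_cast this)
        exact this
      have := Nat.le_of_dvd one_pos this
      omega
    exact ⟨2, t - 2, hu2, (unit_iff_cast p r hp hr _).mpr hftv, by ring⟩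

theorem stmt8_aux (p r : ℕ) (hp : p.Prime) (hodd : Odd p) (hr : 1 ≤ r)
    (m : ℕ) (x : Fin m → ZMod (p ^ r))
    (h2 : 2 ≤ (Finset.univ.filter fun i => IsUnit (x i)).card) :
    ∃ a : Fin m → ZMod (p ^ r), (∀ i, IsUnit (a i)) ∧ ∑ i, a i * x i = 0 := by
  classical
  obtain ⟨i, hi, j, hj, hij⟩ := Finset.one_lt_card.mp h2
  have hxi : IsUnit (x i) := (Finset.mem_filter.mp hi).2
  have hxj : IsUnit (x j) := (Finset.mem_filter.mp hj).2
  set s : Finset (Fin m) := (Finset.univ.erase i).erase j with hs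
  obtain ⟨u, v, hu, hv, huv⟩ := two_units p r hp hodd hr (-(∑ k ∈ s, x k))
  refine ⟨fun k => if k = i then u * ↑hxi.unit⁻¹ else if k = j then v * ↑hxj.unit⁻¹ else 1,
    ?_, ?_⟩
  · intro k
    dsimp only
    split_ifs
    · exact hu.mul (Units.isUnit _)
    · exact hv.mul (Units.isUnit _)
    · exact isUnit_one
  · have hjmem : j ∈ Finset.univ.erase i := Finset.mem_erase.mpr ⟨hij.symm, Finset.mem_univ j⟩
    rw [← Finset.add_sum_erase _ _ (Finset.mem_univ i), ← Finset.add_sum_erase _ _ hjmem]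
    have e1 : (if i = i then u * ↑hxi.unit⁻¹ else if i = j then v * ↑hxj.unit⁻¹ else 1) * x i
        = u := by
      rw [if_pos rfl, mul_assoc]
      rw [hxi.val_inv_mul, mul_one]
    have e2 : (if j = i then u * ↑hxi.unit⁻¹ else if j = j then v * ↑hxj.unit⁻¹ else 1) * x j
        = v := by
      rw [if_neg hij.symm, if_pos rfl, mul_assoc]
      rw [hxj.val_inv_mul, mul_one]
    have e3 : ∑ k ∈ s, (if k = i then u * ↑hxi.unit⁻¹ else if k = j then v * ↑hxj.unit⁻¹ else 1)
        * x k = ∑ k ∈ s, x k := by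
      refine Finset.sum_congr rfl fun k hk => ?_
      have h1 := Finset.mem_erase.mp hk
      have hkj := h1.1
      have hki := (Finset.mem_erase.mp h1.2).1
      rw [if_neg hki, if_neg hkj, one_mul]
    rw [e1, e2, e3, ← add_assoc, huv]
    ring


theorem stmt8 (p r : ℕ) (hp : p.Prime) (hodd : Odd p) (hr : 1 ≤ r)
    (m : ℕ) (x : Fin m → ZMod (p ^ r))
    (h2 : 2 ≤ (Finset.univ.filter fun i => IsUnit (x i)).card) :
    ∃ a : Fin m → ZMod (p ^ r), (∀ i, IsUnit (a i)) ∧ ∑ i, a i * x i = 0 :=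
  stmt8_aux p r hp hodd hr m x h2
end

section
/- Let n = n_1 n_2 be a squarefree odd integer not divisible by 7 or 13, with n_1 a product of primes ≡ 1 (mod 3) and n_2 a product of primes ≡ 2 (mod 3). Let p be a prime divisor of n_2, n' = n/p, let S'_1 : x_1,…,x_ℓ be a T_{n'}-extremal sequence in Z/n'Z, and let x* ∈ Z/nZ be not divisible by p. Then the sequence S : x*, p x_1, …, p x_ℓ is a T_n-extremal sequence in Z/nZ. -/
/-
The sequence `S` has no weighted zero sum: modulo `p` only the term `x*` survives, and modulo
`n' = n / p` the unit `p` cancels, leaving a weighted zero sum of `S'₁`. Hence `D_{T_n} ≥ ℓ + 2`,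
and it remains to show that every sequence `g` of length `D_{T_{n'}} + 1` over `ZMod n` has a
weighted zero sum. By the Chinese remainder theorem such a zero sum is a pair of zero sums modulo
`p` and modulo `n'` on the same support. As `p ≡ 2 (mod 3)`, every unit modulo `p` is a cube, so a
zero sum of `g` modulo `n'` lifts unless exactly one of its terms, say `i₀`, is nonzero modulo `p`.
Dropping `i₀` from `g` gives a second zero sum modulo `n'`; if it does not lift either, its only
term nonzero modulo `p` is some `i₁ ≠ i₀`, and the union of the two zero sums is again a zero sum
modulo `n'`, now with two terms nonzero modulo `p`, so it lifts.
This union property holds modulo every prime `q ∉ {2, 3, 7, 13}`: for `q ≡ 1 (mod 3)` a Jacobi sum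
estimate (`|J(χ, χ)| = √q` for a cubic character `χ`) shows that every `t ≠ 0` is `a + c b` with
cubes `a, b` once `q ≥ 19`, which allows one to solve any support of size at least three.
-/

open Finset

open scoped Classical

lemma one_mem_Tset (m : ℕ) : (1 : ZMod m) ∈ Tset m := ⟨1, by simp⟩

lemma neg_mem_Tset {m : ℕ} {a : ZMod m} (h : a ∈ Tset m) : -a ∈ Tset m := by
  obtain ⟨u, rfl⟩ := h
  exact ⟨-u, by simp [Odd.neg_pow (by decide : Odd 3)]⟩

lemma isUnit_of_mem_Tset {m : ℕ} {a : ZMod m} (h : a ∈ Tset m) : IsUnit a := by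
  obtain ⟨u, rfl⟩ := h
  exact u.isUnit.pow 3

lemma castHom_mem_Tset {m k : ℕ} (hk : k ∣ m) {a : ZMod m} (ha : a ∈ Tset m) :
    ZMod.castHom hk (ZMod k) a ∈ Tset k := by
  obtain ⟨u, rfl⟩ := ha
  exact ⟨Units.map (ZMod.castHom hk (ZMod k)).toMonoidHom u, (map_pow _ _ _).symm⟩

lemma mem_Tset_of_mod_three_eq_two {q : ℕ} [hq : Fact q.Prime] (h2 : q % 3 = 2) {t : ZMod q}
    (ht : t ≠ 0) : t ∈ Tset q := by
  have hcop : (Nat.card (ZMod q)ˣ).Coprime 3 := by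
    rw [Nat.card_eq_fintype_card, ZMod.card_units_eq_totient, Nat.totient_prime hq.out]
    exact (Nat.prime_three.coprime_iff_not_dvd.mpr (by omega)).symm
  let w := Units.mk0 t ht
  exact ⟨(powCoprime hcop).symm w, congrArg Units.val ((powCoprime hcop).apply_symm_apply w)⟩

section JacobiSum

open MulChar

lemma sum_apply_mul_apply_sub {F R : Type*} [Field F] [Fintype F] [CommRing R]
    (ψ φ : MulChar F R) {t : F} (ht : t ≠ 0) :
    ∑ s, ψ s * φ (t - s) = ψ t * φ t * jacobiSum ψ φ := by
  rw [jacobiSum, Finset.mul_sum, ← Equiv.sum_comp (Equiv.mulLeft₀ t ht)]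
  refine Finset.sum_congr rfl fun r _ => ?_
  rw [Equiv.mulLeft₀_apply, show t - t * r = t * (1 - r) by ring, map_mul, map_mul]
  ring

lemma norm_jacobiSum_eq_sqrt {F : Type*} [Field F] [Fintype F] {χ φ : MulChar F ℂ}
    (hχ : χ ≠ 1) (hφ : φ ≠ 1) (hχφ : χ * φ ≠ 1) :
    ‖jacobiSum χ φ‖ = √(Fintype.card F) := by
  have hstar : star (jacobiSum χ φ) = jacobiSum χ⁻¹ φ⁻¹ := by
    simp only [jacobiSum, star_sum, star_mul', star_apply']
  have hchar : ringChar ℂ ≠ ringChar F := by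
    rw [ringChar.eq_zero]
    exact (CharP.char_ne_zero_of_finite F (ringChar F)).symm
  have h := jacobiSum_mul_jacobiSum_inv hchar hχ hφ hχφ
  rw [← hstar, RCLike.star_def, Complex.mul_conj, ← Complex.sq_norm] at h
  rw [← Real.sqrt_sq (norm_nonneg _)]
  exact congrArg Real.sqrt (by exact_mod_cast h)

lemma sum_mul_sum_pow_apply_sub {F R : Type*} [Field F] [Fintype F] [CommRing R]
    (χ : MulChar F R) (k : ℕ) (c : F) {t : F} (ht : t ≠ 0) :
    ∑ s, (∑ i ∈ range k, (χ ^ i) s) * (∑ j ∈ range k, (χ ^ j) (c * (t - s))) =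
      ∑ i ∈ range k, ∑ j ∈ range k,
        (χ ^ j) c * ((χ ^ i) t * (χ ^ j) t * jacobiSum (χ ^ i) (χ ^ j)) := by
  simp only [sum_mul_sum, map_mul]
  rw [sum_comm]
  refine sum_congr rfl fun i _ => ?_
  rw [sum_comm]
  refine sum_congr rfl fun j _ => ?_
  rw [← sum_apply_mul_apply_sub _ _ ht, mul_sum]
  exact sum_congr rfl fun s _ => by ring

end JacobiSum

section CubicCharacter

open MulChar

variable {q : ℕ} [hq : Fact q.Prime] {χ : MulChar (ZMod q) ℂ}

lemma exists_mulChar_orderOf_eq_three (h1 : q % 3 = 1) :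
    ∃ χ : MulChar (ZMod q) ℂ, orderOf χ = 3 :=
  exists_mulChar_orderOf (ZMod q) (by rw [ZMod.card]; have := hq.out.two_le; omega)
    (Complex.isPrimitiveRoot_exp 3 three_ne_zero)

lemma mem_Tset_of_sum_pow_apply_ne_zero (hχ : orderOf χ = 3) {s : ZMod q}
    (hs : ∑ i ∈ range 3, (χ ^ i) s ≠ 0) : s ∈ Tset q := by
  have hunit : IsUnit s := by
    by_contra h
    exact hs (sum_eq_zero fun i _ => map_nonunit _ h)
  lift s to (ZMod q)ˣ using hunit
  have hcube : ∀ x : (ZMod q)ˣ, χ x ^ 3 = 1 := fun x => by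
    rw [← pow_apply_coe, ← hχ, pow_orderOf_eq_one, one_apply_coe]
  -- `1 + ω + ω²` vanishes at every cube root of unity `ω ≠ 1`
  have hker : χ s = 1 := by
    by_contra hne
    apply hs
    have h : (χ s - 1) * (1 + χ s + χ s ^ 2) = 0 := by linear_combination hcube s
    simpa [sum_range_succ, pow_apply_coe, sub_ne_zero.mpr hne] using h
  -- `χ` is determined by its value at a generator `g`, so `χ g` has order 3; hence `3 ∣ k`
  -- when `s = gᵏ`
  obtain ⟨g, hg⟩ := IsCyclic.exists_generator (α := (ZMod q)ˣ)
  have hpow : ∀ x : (ZMod q)ˣ, ∃ k : ℕ, g ^ k = x := fun x => by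
    simpa [← mem_powers_iff_mem_zpowers, Submonoid.mem_powers_iff] using hg x
  have hg3 : orderOf (χ g) = 3 := by
    refine orderOf_eq_prime (hcube g) fun h => ?_
    have : χ = 1 := MulChar.ext fun x => by
      obtain ⟨k, rfl⟩ := hpow x
      rw [Units.val_pow_eq_pow_val, map_pow, h, one_pow, ← Units.val_pow_eq_pow_val, one_apply_coe]
    rw [this, orderOf_one] at hχ
    omega
  obtain ⟨k, rfl⟩ := hpow s
  obtain ⟨m, rfl⟩ : 3 ∣ k := by
    rw [← hg3]
    apply orderOf_dvd_of_pow_eq_one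
    rwa [← map_pow, ← Units.val_pow_eq_pow_val]
  exact ⟨g ^ m, by rw [← Units.val_pow_eq_pow_val, ← pow_mul, mul_comm]⟩

lemma norm_jacobiSum_pow_le (hχ : orderOf χ = 3) {i j : ℕ} (hi : i < 3) (hj : j < 3)
    (hij : i ≠ 0 ∨ j ≠ 0) :
    ‖jacobiSum (χ ^ i) (χ ^ j)‖ ≤ if i = j then √q else 1 := by
  have hne : ∀ k, 0 < k → k < 3 → χ ^ k ≠ 1 := fun k hk0 hk3 =>
    pow_ne_one_of_lt_orderOf hk0.ne' (hχ ▸ hk3)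
  have hχ1 : χ ≠ 1 := by simpa using hne 1 one_pos (by norm_num)
  have hχ3 : χ ^ 3 = 1 := hχ ▸ pow_orderOf_eq_one χ
  have hone : ∀ k, 0 < k → k < 3 → ‖jacobiSum 1 (χ ^ k)‖ ≤ 1 := fun k hk0 hk3 => by
    rw [jacobiSum_one_nontrivial (hne k hk0 hk3), norm_neg, norm_one]
  have hinv : ‖jacobiSum χ (χ ^ 2)‖ ≤ 1 := by
    rw [show χ ^ 2 = χ⁻¹ from eq_inv_of_mul_eq_one_right (by rw [← pow_succ']; exact hχ3),
      jacobiSum_nontrivial_inv hχ1, norm_neg]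
    exact DirichletCharacter.norm_le_one χ _
  have hsqrt : ∀ k, 0 < k → k < 3 → ‖jacobiSum (χ ^ k) (χ ^ k)‖ = √q := fun k hk0 hk3 => by
    rw [norm_jacobiSum_eq_sqrt (hne k hk0 hk3) (hne k hk0 hk3), ZMod.card]
    rw [← pow_add]
    interval_cases k
    · exact hne 2 (by norm_num) (by norm_num)
    · rw [show 2 + 2 = 3 + 1 from rfl, pow_succ, hχ3, one_mul]
      exact hχ1
  interval_cases i <;> interval_cases j
  · simp at hij
  · simpa using hone 1 one_pos (by norm_num)
  · simpa using hone 2 two_pos (by norm_num)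
  · simpa [jacobiSum_comm] using hone 1 one_pos (by norm_num)
  · simpa using (hsqrt 1 one_pos (by norm_num)).le
  · simpa using hinv
  · simpa [jacobiSum_comm] using hone 2 two_pos (by norm_num)
  · simpa [jacobiSum_comm] using hinv
  · simpa using (hsqrt 2 two_pos (by norm_num)).le

lemma norm_sum_jacobiSum_sub_le (hχ : orderOf χ = 3) {c t : ZMod q} (hc : c ≠ 0) (ht : t ≠ 0) :
    ‖∑ i ∈ range 3, ∑ j ∈ range 3, (χ ^ j) c * ((χ ^ i) t * (χ ^ j) t *
      jacobiSum (χ ^ i) (χ ^ j)) - (q - 2)‖ ≤ 6 + 2 * √q := by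
  have hmain : ((q : ℂ) - 2) = ∑ i ∈ range 3, ∑ j ∈ range 3,
      if i = 0 ∧ j = 0 then (q : ℂ) - 2 else 0 := by
    simp [sum_range_succ]
  rw [hmain]
  simp only [← sum_sub_distrib]
  calc _ ≤ ∑ i ∈ range 3, ∑ j ∈ range 3, ‖(χ ^ j) c * ((χ ^ i) t * (χ ^ j) t *
          jacobiSum (χ ^ i) (χ ^ j)) - if i = 0 ∧ j = 0 then (q : ℂ) - 2 else 0‖ :=
        (norm_sum_le _ _).trans (sum_le_sum fun i _ => norm_sum_le _ _)
    _ ≤ ∑ i ∈ range 3, ∑ j ∈ range 3,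
          if i = 0 ∧ j = 0 then 0 else if i = j then √q else 1 := by
        refine sum_le_sum fun i hi => sum_le_sum fun j hj => ?_
        by_cases h00 : i = 0 ∧ j = 0
        · obtain ⟨rfl, rfl⟩ := h00
          simp [jacobiSum_one_one, ZMod.card, one_apply (isUnit_iff_ne_zero.mpr ht),
            one_apply (isUnit_iff_ne_zero.mpr hc)]
        rw [if_neg h00, if_neg h00, sub_zero]
        refine le_trans ?_ (norm_jacobiSum_pow_le hχ (mem_range.mp hi) (mem_range.mp hj)
          (not_and_or.mp h00))
        rw [norm_mul, norm_mul, norm_mul]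
        calc _ ≤ 1 * (1 * 1 * ‖jacobiSum (χ ^ i) (χ ^ j)‖) := by
              gcongr <;> apply DirichletCharacter.norm_le_one
          _ = _ := by ring
    _ = 6 + 2 * √q := by
        simp [sum_range_succ]
        ring

lemma exists_mem_Tset_add_mul_eq_of_mod_three_eq_one (h1 : q % 3 = 1) (h19 : 19 ≤ q)
    {c t : ZMod q} (hc : c ≠ 0) (ht : t ≠ 0) :
    ∃ a ∈ Tset q, ∃ b ∈ Tset q, a + c * b = t := by
  obtain ⟨χ, hχ⟩ := exists_mulChar_orderOf_eq_three h1
  set f : ZMod q → ℂ := fun s => ∑ i ∈ range 3, (χ ^ i) s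
  -- `f s ≠ 0` only for cubes `s`, and `∑ s, f s * f (c⁻¹ * (t - s))` is close to `q - 2`
  suffices hS : ∑ s, f s * f (c⁻¹ * (t - s)) ≠ 0 by
    obtain ⟨s, -, hs⟩ := exists_ne_zero_of_sum_ne_zero hS
    refine ⟨s, mem_Tset_of_sum_pow_apply_ne_zero hχ (left_ne_zero_of_mul hs),
      c⁻¹ * (t - s), mem_Tset_of_sum_pow_apply_ne_zero hχ (right_ne_zero_of_mul hs), ?_⟩
    field_simp
    ring
  have hbound := norm_sum_jacobiSum_sub_le hχ (inv_ne_zero hc) ht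
  rw [← sum_mul_sum_pow_apply_sub χ 3 c⁻¹ ht] at hbound
  have hlt : 6 + 2 * √q < q - 2 := by
    have hq19 : (19 : ℝ) ≤ q := by exact_mod_cast h19
    nlinarith [Real.sq_sqrt (Nat.cast_nonneg q : (0 : ℝ) ≤ q), Real.sqrt_nonneg q]
  intro h0
  rw [h0, zero_sub, norm_neg, show (q : ℂ) - 2 = ((q - 2 : ℝ) : ℂ) by push_cast; ring,
    Complex.norm_real, Real.norm_of_nonneg (by linarith [Real.sqrt_nonneg q])] at hbound
  linarith

end CubicCharacter

lemma exists_mem_Tset_add_mul_eq {q : ℕ} [hq : Fact q.Prime] (hq' : q ∉ ({2, 3, 7, 13} : Set ℕ))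
    {c t : ZMod q} (hc : c ≠ 0) (ht : t ≠ 0) :
    ∃ a ∈ Tset q, ∃ b ∈ Tset q, a + c * b = t := by
  simp only [Set.mem_insert_iff, Set.mem_singleton_iff, not_or] at hq'
  obtain ⟨h2, h3, h7, h13⟩ := hq'
  have hmod : q % 3 = 1 ∨ q % 3 = 2 := by
    have := (Nat.prime_dvd_prime_iff_eq Nat.prime_three hq.out).not.mpr (Ne.symm h3)
    omega
  rcases hmod with h1 | h2'
  · refine exists_mem_Tset_add_mul_eq_of_mod_three_eq_one h1 ?_ hc ht
    by_contra! hlt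
    have := hq.out
    interval_cases q <;> first | omega | norm_num at this
  · have htwo : (2 : ZMod q) ≠ 0 := Ring.two_ne_zero (by rwa [ZMod.ringChar_zmod_n])
    -- every unit is a cube, so it suffices to split `t` into two nonzero summands
    obtain ⟨z, hz, hzt⟩ : ∃ z : ZMod q, z ≠ 0 ∧ z ≠ t := by
      by_cases ht1 : t = 1
      · exact ⟨-1, by simp, fun h => htwo (by linear_combination -h - ht1)⟩
      · exact ⟨1, one_ne_zero, Ne.symm ht1⟩
    refine ⟨z, mem_Tset_of_mod_three_eq_two h2' hz, (t - z) / c,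
      mem_Tset_of_mod_three_eq_two h2' (div_ne_zero (sub_ne_zero.mpr hzt.symm) hc), ?_⟩
    field_simp
    ring

def HasWZSOn {n : ℕ} {ι : Type} (A : Set (ZMod n)) (I : Finset ι) (x : ι → ZMod n) : Prop :=
  ∃ a : ι → ZMod n, (∀ i ∈ I, a i ∈ A) ∧ ∑ i ∈ I, a i * x i = 0

section WeightedZeroSums

variable {n : ℕ} {ι : Type} {A : Set (ZMod n)} {I : Finset ι} {x : ι → ZMod n}

lemma HasWZSOn.image [DecidableEq ι] {κ : Type} {f : κ → ι} (hf : Function.Injective f)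
    {I : Finset κ} (h : HasWZSOn A I (x ∘ f)) : HasWZSOn A (I.image f) x := by
  obtain ⟨a, ha, hsum⟩ := h
  refine ⟨Function.extend f a 1, ?_, ?_⟩
  · simpa [hf.extend_apply] using ha
  · simpa [sum_image hf.injOn, hf.extend_apply] using hsum

lemma HasWZS.of_comp {κ : Type} {f : κ → ι} (hf : Function.Injective f)
    (h : HasWZS A (x ∘ f)) : HasWZS A x := by
  classical
  obtain ⟨I, hI, hsum⟩ := h
  exact ⟨I.image f, hI.image f, HasWZSOn.image hf hsum⟩

lemma hasWZSOn_filter_ne_zero_iff (hA : A.Nonempty) :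
    HasWZSOn A {i ∈ I | x i ≠ 0} x ↔ HasWZSOn A I x := by
  have hsum : ∀ a : ι → ZMod n, ∑ i ∈ I with x i ≠ 0, a i * x i = ∑ i ∈ I, a i * x i :=
    fun a => sum_filter_of_ne fun i _ h => right_ne_zero_of_mul h
  constructor
  · rintro ⟨a, ha, hzero⟩
    refine ⟨fun i => if x i = 0 then hA.some else a i, fun i hi => ?_, ?_⟩
    · dsimp only
      split_ifs with h
      · exact hA.some_mem
      · exact ha i (mem_filter.mpr ⟨hi, h⟩)
    · calc _ = ∑ i ∈ I with x i ≠ 0, (if x i = 0 then hA.some else a i) * x i := (hsum _).symm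
        _ = 0 := (sum_congr rfl fun i hi => by rw [if_neg (mem_filter.mp hi).2]).trans hzero
  · rintro ⟨a, ha, hzero⟩
    exact ⟨a, fun i hi => ha i (mem_filter.mp hi).1, (hsum a).trans hzero⟩

lemma hasWZSOn_of_filter_eq {J : Finset ι} (hA : A.Nonempty)
    (hIJ : {i ∈ I | x i ≠ 0} = {i ∈ J | x i ≠ 0}) (h : HasWZSOn A I x) : HasWZSOn A J x := by
  rwa [← hasWZSOn_filter_ne_zero_iff hA, ← hIJ, hasWZSOn_filter_ne_zero_iff hA]

lemma hasWZSOn_of_filter_eq_empty (hA : A.Nonempty) (h : {i ∈ I | x i ≠ 0} = ∅) :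
    HasWZSOn A I x :=
  (hasWZSOn_filter_ne_zero_iff hA).mp (h ▸ ⟨fun _ => 0, by simp, by simp⟩)

lemma exists_sum_ne_zero_of_two_mul_ne_zero {i : ι} (hi : i ∈ I) (hx : 2 * x i ≠ 0) :
    ∃ w : ι → ZMod n, (∀ j ∈ I, w j ∈ Tset n) ∧ ∑ j ∈ I, w j * x j ≠ 0 := by
  by_contra! h
  have hone := h 1 fun j _ => one_mem_Tset n
  have hflip := h (Function.update 1 i (-1)) fun j _ => by
    by_cases hj : j = i
    · simpa [hj] using neg_mem_Tset (one_mem_Tset n)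
    · simpa [hj] using one_mem_Tset n
  rw [← add_sum_erase I _ hi] at hone hflip
  rw [Function.update_self, sum_congr rfl fun j hj => by
    rw [Function.update_of_ne (ne_of_mem_erase hj)]] at hflip
  simp only [Pi.one_apply] at hone hflip
  exact hx (by linear_combination hone - hflip)

end WeightedZeroSums

section PrimeModulus

variable {q : ℕ} [Fact q.Prime] {ι : Type} {I : Finset ι} {x : ι → ZMod q}

lemma card_filter_ne_zero_ne_one (h : HasWZSOn (Tset q) I x) : #{i ∈ I | x i ≠ 0} ≠ 1 := by
  intro h1
  obtain ⟨i, hi⟩ := card_eq_one.mp h1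
  have hxi : x i ≠ 0 := (mem_filter.mp (hi ▸ mem_singleton_self i : i ∈ {i ∈ I | x i ≠ 0})).2
  rw [← hasWZSOn_filter_ne_zero_iff ⟨1, one_mem_Tset q⟩, hi] at h
  obtain ⟨a, ha, hsum⟩ := h
  rw [sum_singleton] at hsum
  exact mul_ne_zero (isUnit_of_mem_Tset (ha i (mem_singleton_self i))).ne_zero hxi hsum

lemma hasWZSOn_insert_insert
    (hcover : ∀ c t : ZMod q, c ≠ 0 → t ≠ 0 → ∃ a ∈ Tset q, ∃ b ∈ Tset q, a + c * b = t)
    {i₁ i₂ : ι} {J : Finset ι} (h₁₂ : i₁ ≠ i₂) (h₁ : i₁ ∉ J) (h₂ : i₂ ∉ J)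
    (hx₁ : x i₁ ≠ 0) (hx₂ : x i₂ ≠ 0) {w : ι → ZMod q} (hw : ∀ j ∈ J, w j ∈ Tset q)
    (hs : ∑ j ∈ J, w j * x j ≠ 0) : HasWZSOn (Tset q) (insert i₁ (insert i₂ J)) x := by
  obtain ⟨a, ha, b, hb, hab⟩ := hcover (x i₂ / x i₁) (-(∑ j ∈ J, w j * x j) / x i₁)
    (div_ne_zero hx₂ hx₁) (div_ne_zero (neg_ne_zero.mpr hs) hx₁)
  refine ⟨Function.update (Function.update w i₂ b) i₁ a, fun i hi => ?_, ?_⟩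
  · rcases mem_insert.mp hi with rfl | hi
    · simpa using ha
    rcases mem_insert.mp hi with rfl | hi
    · simpa [h₁₂.symm] using hb
    · simpa [ne_of_mem_of_not_mem hi h₁, ne_of_mem_of_not_mem hi h₂] using hw i hi
  · rw [sum_insert (by simp [h₁₂, h₁]), sum_insert h₂, sum_congr rfl fun j hj => by
      rw [Function.update_of_ne (ne_of_mem_of_not_mem hj h₁),
        Function.update_of_ne (ne_of_mem_of_not_mem hj h₂)]]
    simp only [Function.update_self, Function.update_of_ne h₁₂.symm]
    field_simp at hab
    linear_combination hab

lemma hasWZSOn_of_two_lt_card (hq2 : q ≠ 2)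
    (hcover : ∀ c t : ZMod q, c ≠ 0 → t ≠ 0 → ∃ a ∈ Tset q, ∃ b ∈ Tset q, a + c * b = t)
    (h : 2 < #{i ∈ I | x i ≠ 0}) : HasWZSOn (Tset q) I x := by
  obtain ⟨i₁, h₁, i₂, h₂, i₃, h₃, h₁₂, h₁₃, h₂₃⟩ := two_lt_card.mp h
  simp only [mem_filter] at h₁ h₂ h₃
  have h₃J : i₃ ∈ (I.erase i₁).erase i₂ :=
    mem_erase.mpr ⟨h₂₃.symm, mem_erase.mpr ⟨h₁₃.symm, h₃.1⟩⟩
  have htwo : (2 : ZMod q) ≠ 0 := Ring.two_ne_zero (by rwa [ZMod.ringChar_zmod_n])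
  obtain ⟨w, hw, hs⟩ := exists_sum_ne_zero_of_two_mul_ne_zero h₃J (mul_ne_zero htwo h₃.2)
  rw [← insert_erase h₁.1, ← insert_erase (mem_erase.mpr ⟨h₁₂.symm, h₂.1⟩)]
  exact hasWZSOn_insert_insert hcover h₁₂ (by simp) (by simp) h₁.2 h₂.2 hw hs

lemma HasWZSOn.union (hq2 : q ≠ 2)
    (hcover : ∀ c t : ZMod q, c ≠ 0 → t ≠ 0 → ∃ a ∈ Tset q, ∃ b ∈ Tset q, a + c * b = t)
    [DecidableEq ι] {I₁ I₂ : Finset ι} (h₁ : HasWZSOn (Tset q) I₁ x) (h₂ : HasWZSOn (Tset q) I₂ x) :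
    HasWZSOn (Tset q) (I₁ ∪ I₂) x := by
  have hA : (Tset q).Nonempty := ⟨1, one_mem_Tset q⟩
  have hS : {i ∈ I₁ ∪ I₂ | x i ≠ 0} = {i ∈ I₁ | x i ≠ 0} ∪ {i ∈ I₂ | x i ≠ 0} :=
    filter_union _ _ _
  have hc₁ := card_filter_ne_zero_ne_one h₁
  have hc₂ := card_filter_ne_zero_ne_one h₂
  have hle₁ := card_le_card (hS ▸ subset_union_left : {i ∈ I₁ | x i ≠ 0} ⊆ _)
  have hle₂ := card_le_card (hS ▸ subset_union_right : {i ∈ I₂ | x i ≠ 0} ⊆ _)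
  rcases lt_trichotomy #{i ∈ I₁ ∪ I₂ | x i ≠ 0} 2 with hlt | heq | hgt
  · refine hasWZSOn_of_filter_eq_empty hA ?_
    rw [hS, card_eq_zero.mp (by omega : #{i ∈ I₁ | x i ≠ 0} = 0),
      card_eq_zero.mp (by omega : #{i ∈ I₂ | x i ≠ 0} = 0), union_empty]
  · -- a support of size two is already the support of `I₁` or of `I₂`
    by_cases he₁ : {i ∈ I₁ | x i ≠ 0} = ∅
    · exact hasWZSOn_of_filter_eq hA (by rw [hS, he₁, empty_union]) h₂
    · have : 0 < #{i ∈ I₁ | x i ≠ 0} := card_pos.mpr (nonempty_iff_ne_empty.mpr he₁)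
      exact hasWZSOn_of_filter_eq hA
        (eq_of_subset_of_card_le (hS ▸ subset_union_left) (by omega)) h₁
  · exact hasWZSOn_of_two_lt_card hq2 hcover hgt

lemma hasWZSOn_of_mod_three_eq_two (h2 : q % 3 = 2) (hq2 : q ≠ 2)
    (h : #{i ∈ I | x i ≠ 0} ≠ 1) : HasWZSOn (Tset q) I x := by
  have hA : (Tset q).Nonempty := ⟨1, one_mem_Tset q⟩
  rcases lt_trichotomy #{i ∈ I | x i ≠ 0} 2 with hlt | heq | hgt
  · exact hasWZSOn_of_filter_eq_empty hA (card_eq_zero.mp (by omega))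
  · obtain ⟨i, j, hij, hS⟩ := card_eq_two.mp heq
    have hxi : x i ≠ 0 := (mem_filter.mp (hS ▸ mem_insert_self i {j} : i ∈ {i ∈ I | x i ≠ 0})).2
    have hxj : x j ≠ 0 := (mem_filter.mp
      (hS ▸ mem_insert_of_mem (mem_singleton_self j) : j ∈ {i ∈ I | x i ≠ 0})).2
    rw [← hasWZSOn_filter_ne_zero_iff hA, hS]
    refine ⟨fun k => if k = i then 1 else -x i / x j, fun k _ => ?_, ?_⟩
    · dsimp only
      split_ifs
      · exact one_mem_Tset q
      · exact mem_Tset_of_mod_three_eq_two h2 (div_ne_zero (neg_ne_zero.mpr hxi) hxj)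
    · simp only [sum_pair hij, if_true, if_neg hij.symm]
      field_simp
      ring
  · exact hasWZSOn_of_two_lt_card hq2
      (fun _ _ => exists_mem_Tset_add_mul_eq (by simp; omega)) hgt

end PrimeModulus

section ChineseRemainder

variable {a b : ℕ} {ι : Type} {I : Finset ι}

lemma chineseRemainder_fst (hab : a.Coprime b) (z : ZMod (a * b)) :
    (ZMod.chineseRemainder hab z).1 = ZMod.castHom (dvd_mul_right a b) (ZMod a) z :=
  RingHom.congr_fun
    (RingHom.ext_zmod ((RingHom.fst _ _).comp (ZMod.chineseRemainder hab).toRingHom) _) z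

lemma chineseRemainder_snd (hab : a.Coprime b) (z : ZMod (a * b)) :
    (ZMod.chineseRemainder hab z).2 = ZMod.castHom (dvd_mul_left b a) (ZMod b) z :=
  RingHom.congr_fun
    (RingHom.ext_zmod ((RingHom.snd _ _).comp (ZMod.chineseRemainder hab).toRingHom) _) z

lemma mem_Tset_mul_iff (hab : a.Coprime b) {z : ZMod (a * b)} :
    z ∈ Tset (a * b) ↔ ZMod.castHom (dvd_mul_right a b) (ZMod a) z ∈ Tset a ∧
      ZMod.castHom (dvd_mul_left b a) (ZMod b) z ∈ Tset b := by
  refine ⟨fun hz => ⟨castHom_mem_Tset _ hz, castHom_mem_Tset _ hz⟩, ?_⟩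
  rintro ⟨⟨u, hu⟩, ⟨v, hv⟩⟩
  set e := ZMod.chineseRemainder hab
  refine ⟨Units.map e.symm.toMonoidHom (MulEquiv.prodUnits.symm (u, v)), e.injective ?_⟩
  have hw : e (Units.map e.symm.toMonoidHom (MulEquiv.prodUnits.symm (u, v)) : ZMod (a * b)) =
      ((u : ZMod a), (v : ZMod b)) := by
    exact e.apply_symm_apply ((u : ZMod a), (v : ZMod b))
  rw [map_pow, hw]
  ext
  · rw [Prod.pow_fst, chineseRemainder_fst, hu]
  · rw [Prod.pow_snd, chineseRemainder_snd, hv]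

lemma hasWZSOn_mul_iff (hab : a.Coprime b) {x : ι → ZMod (a * b)} :
    HasWZSOn (Tset (a * b)) I x ↔
      HasWZSOn (Tset a) I (ZMod.castHom (dvd_mul_right a b) (ZMod a) ∘ x) ∧
      HasWZSOn (Tset b) I (ZMod.castHom (dvd_mul_left b a) (ZMod b) ∘ x) := by
  constructor
  · rintro ⟨w, hw, hsum⟩
    refine ⟨⟨ZMod.castHom (dvd_mul_right a b) (ZMod a) ∘ w,
      fun i hi => castHom_mem_Tset _ (hw i hi), ?_⟩, ⟨ZMod.castHom (dvd_mul_left b a) (ZMod b) ∘ w,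
      fun i hi => castHom_mem_Tset _ (hw i hi), ?_⟩⟩
    · simpa only [Function.comp_apply, map_sum, map_mul, map_zero] using
        congrArg (ZMod.castHom (dvd_mul_right a b) (ZMod a)) hsum
    · simpa only [Function.comp_apply, map_sum, map_mul, map_zero] using
        congrArg (ZMod.castHom (dvd_mul_left b a) (ZMod b)) hsum
  · rintro ⟨⟨wa, hwa, hsa⟩, ⟨wb, hwb, hsb⟩⟩
    set e := ZMod.chineseRemainder hab
    have hfst : ∀ i, ZMod.castHom (dvd_mul_right a b) (ZMod a) (e.symm (wa i, wb i)) = wa i :=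
      fun i => by rw [← chineseRemainder_fst hab, e.apply_symm_apply]
    have hsnd : ∀ i, ZMod.castHom (dvd_mul_left b a) (ZMod b) (e.symm (wa i, wb i)) = wb i :=
      fun i => by rw [← chineseRemainder_snd hab, e.apply_symm_apply]
    refine ⟨fun i => e.symm (wa i, wb i), fun i hi => ?_, e.injective ?_⟩
    · rw [mem_Tset_mul_iff hab, hfst, hsnd]
      exact ⟨hwa i hi, hwb i hi⟩
    · ext
      · rw [chineseRemainder_fst, chineseRemainder_fst, map_sum, map_zero]
        simpa only [map_mul, hfst, Function.comp_apply] using hsa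
      · rw [chineseRemainder_snd, chineseRemainder_snd, map_sum, map_zero]
        simpa only [map_mul, hsnd, Function.comp_apply] using hsb

end ChineseRemainder

lemma HasWZSOn.union_of_squarefree {M : ℕ} (hM : Squarefree M)
    (hgood : ∀ r, r.Prime → r ∣ M → r ∉ ({2, 3, 7, 13} : Set ℕ)) {ι : Type}
    [DecidableEq ι] {I₁ I₂ : Finset ι} {x : ι → ZMod M} (h₁ : HasWZSOn (Tset M) I₁ x)
    (h₂ : HasWZSOn (Tset M) I₂ x) : HasWZSOn (Tset M) (I₁ ∪ I₂) x := by
  induction M using induction_on_primes with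
  | zero => exact absurd hM not_squarefree_zero
  | one => exact ⟨1, fun _ _ => one_mem_Tset 1, Subsingleton.elim _ _⟩
  | prime_mul p a hp ih =>
    obtain ⟨hpa, -, ha⟩ := Nat.squarefree_mul_iff.mp hM
    have : Fact p.Prime := ⟨hp⟩
    have hp' := hgood p hp (dvd_mul_right p a)
    rw [hasWZSOn_mul_iff hpa] at h₁ h₂ ⊢
    exact ⟨HasWZSOn.union (by simp_all) (fun _ _ => exists_mem_Tset_add_mul_eq hp') h₁.1 h₂.1,
      ih ha (fun r hr hra => hgood r hr (hra.mul_left p)) h₁.2 h₂.2⟩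

section Davenport

variable {n : ℕ} {A : Set (ZMod n)} {L : ℕ}

lemma hasWZS_of_davA_eq (h : DavA n A = L + 1) (f : Fin (L + 1) → ZMod n) : HasWZS A f := by
  have hne : {ℓ : ℕ | 0 < ℓ ∧ ∀ x : Fin ℓ → ZMod n, HasWZS A x}.Nonempty := by
    by_contra hem
    rw [Set.not_nonempty_iff_eq_empty] at hem
    simp [DavA, hem] at h
  have hmem := Nat.sInf_mem hne
  rw [← DavA, h] at hmem
  exact hmem.2 f

lemma davA_eq_of_not_hasWZS (hall : ∀ f : Fin (L + 1) → ZMod n, HasWZS A f)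
    (x : Fin L → ZMod n) (hx : ¬ HasWZS A x) : DavA n A = L + 1 := by
  refine le_antisymm (Nat.sInf_le ⟨L.succ_pos, hall⟩) (le_csInf ⟨_, L.succ_pos, hall⟩ ?_)
  rintro K ⟨-, hK⟩
  by_contra! hlt
  exact hx (HasWZS.of_comp (Fin.castLE_injective (by omega : K ≤ L)) (hK _))

end Davenport

lemma hasWZS_of_mul_prime {N p n' D : ℕ} (hN : N = p * n') (hp : p.Prime) (hp3 : p % 3 = 2)
    (hp2 : p ≠ 2) (hcop : p.Coprime n') (hn' : Squarefree n')
    (hgood : ∀ r, r.Prime → r ∣ n' → r ∉ ({2, 3, 7, 13} : Set ℕ))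
    (hD : ∀ f : Fin D → ZMod n', HasWZS (Tset n') f) (g : Fin (D + 1) → ZMod N) :
    HasWZS (Tset N) g := by
  subst hN
  have : Fact p.Prime := ⟨hp⟩
  set u := ZMod.castHom (dvd_mul_right p n') (ZMod p) ∘ g
  set v := ZMod.castHom (dvd_mul_left n' p) (ZMod n') ∘ g
  have havoid : ∀ j, ∃ I, j ∉ I ∧ I.Nonempty ∧ HasWZSOn (Tset n') I v := fun j => by
    obtain ⟨I, hI, hsum⟩ := hD (v ∘ j.succAbove)
    exact ⟨I.image j.succAbove, by simp [Fin.succAbove_ne], hI.image _,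
      HasWZSOn.image Fin.succAbove_right_injective hsum⟩
  by_contra hfree
  -- every zero sum modulo `n'` lifts, unless its support modulo `p` is a single index
  have hsingle : ∀ I, I.Nonempty → HasWZSOn (Tset n') I v → #{i ∈ I | u i ≠ 0} = 1 := by
    intro I hI hv
    by_contra h1
    exact hfree ⟨I, hI, (hasWZSOn_mul_iff hcop).mpr ⟨hasWZSOn_of_mod_three_eq_two hp3 hp2 h1, hv⟩⟩
  obtain ⟨I₁, -, hI₁, hv₁⟩ := havoid 0
  obtain ⟨i₀, hi₀⟩ := card_eq_one.mp (hsingle I₁ hI₁ hv₁)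
  obtain ⟨I₂, hi₀I₂, hI₂, hv₂⟩ := havoid i₀
  obtain ⟨i₁, hi₁⟩ := card_eq_one.mp (hsingle I₂ hI₂ hv₂)
  have hU := hsingle (I₁ ∪ I₂) (hI₁.mono subset_union_left) (hv₁.union_of_squarefree hn' hgood hv₂)
  have hi₁I₂ : i₁ ∈ I₂ := (mem_filter.mp (hi₁ ▸ mem_singleton_self i₁ : i₁ ∈ {i ∈ I₂ | u i ≠ 0})).1
  rw [filter_union, hi₀, hi₁, ← insert_eq, card_pair (ne_of_mem_of_not_mem hi₁I₂ hi₀I₂).symm] at hU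
  omega

lemma natCast_dvd_of_castHom_eq_zero {n p : ℕ} (hp : p ∣ n) {z : ZMod n}
    (hz : ZMod.castHom hp (ZMod p) z = 0) : (p : ZMod n) ∣ z := by
  rw [← ZMod.intCast_zmod_cast z] at hz ⊢
  rw [map_intCast, ZMod.intCast_zmod_eq_zero_iff_dvd] at hz
  obtain ⟨k, hk⟩ := hz
  exact ⟨k, by rw [hk]; push_cast; ring⟩

lemma not_hasWZS_cons {n m p ℓ : ℕ} (hm : m ∣ n) (hp : p ∣ n) (hpm : p.Coprime m)
    {x : Fin ℓ → ZMod m} (hx : ¬ HasWZS (Tset m) x) {xs : ZMod n} (hxs : ¬ (p : ZMod n) ∣ xs) :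
    ¬ HasWZS (Tset n) (Fin.cons xs fun i => (p : ZMod n) * (ZMod.cast (x i) : ZMod n)) := by
  rintro ⟨I, hI, a, ha, hsum⟩
  by_cases h0 : 0 ∈ I
  · -- modulo `p` only the term of `xs` survives
    have hπ := congrArg (ZMod.castHom hp (ZMod p)) hsum
    rw [map_sum, map_zero, sum_eq_single_of_mem 0 h0 fun i _ hi => ?_, map_mul,
      Fin.cons_zero] at hπ
    · exact hxs (natCast_dvd_of_castHom_eq_zero hp
        ((isUnit_of_mem_Tset (castHom_mem_Tset hp (ha 0 h0))).mul_right_eq_zero.mp hπ))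
    · obtain ⟨j, rfl⟩ := Fin.exists_succ_eq.mpr hi
      rw [Fin.cons_succ, map_mul, map_mul, map_natCast, ZMod.natCast_self, zero_mul, mul_zero]
  · -- modulo `m` the factor `p` is a unit and cancels
    have hπ := congrArg (ZMod.castHom hm (ZMod m)) hsum
    rw [map_sum, map_zero, ← sum_preimage Fin.succ I (Fin.succ_injective _).injOn _
      fun i hi hi' => (hi' (Fin.exists_succ_eq.mpr (ne_of_mem_of_not_mem hi h0))).elim] at hπ
    refine hx ⟨I.preimage Fin.succ (Fin.succ_injective _).injOn, ?_,
      fun j => ZMod.castHom hm (ZMod m) (a j.succ),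
      fun j hj => castHom_mem_Tset hm (ha _ (mem_preimage.mp hj)), ?_⟩
    · obtain ⟨i, hi⟩ := hI
      obtain ⟨j, rfl⟩ := Fin.exists_succ_eq.mpr (ne_of_mem_of_not_mem hi h0)
      exact ⟨j, mem_preimage.mpr hi⟩
    · refine ((ZMod.isUnit_iff_coprime p m).mpr hpm).mul_right_eq_zero.mp ?_
      rw [mul_sum, ← hπ]
      refine sum_congr rfl fun j _ => ?_
      simp only [Fin.cons_succ, map_mul, map_natCast, ZMod.ringHom_map_cast]
      ring

theorem stmt13 (n n1 n2 : ℕ) (h : n = n1 * n2) (hsf : Squarefree n) (hodd : Odd n)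
    (h7 : ¬ (7 ∣ n)) (h13 : ¬ (13 ∣ n))
    (h1 : ∀ p : ℕ, p.Prime → p ∣ n1 → p % 3 = 1)
    (h2 : ∀ q : ℕ, q.Prime → q ∣ n2 → q % 3 = 2)
    (p : ℕ) (hp : p.Prime) (hpn2 : p ∣ n2)
    (ℓ : ℕ) (x : Fin ℓ → ZMod (n / p))
    (hx : IsExtremal (Tset (n / p)) x)
    (xs : ZMod n) (hxs : ¬ ((p : ZMod n) ∣ xs)) :
    IsExtremal (Tset n)
      (Fin.cons xs (fun i => (p : ZMod n) * (ZMod.cast (x i) : ZMod n))) := by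
  have hpn : p ∣ n := h ▸ hpn2.trans (dvd_mul_left n2 n1)
  have hn : n = p * (n / p) := (Nat.mul_div_cancel' hpn).symm
  obtain ⟨hcop, -, hsf'⟩ := Nat.squarefree_mul_iff.mp (hn ▸ hsf : Squarefree (p * (n / p)))
  have hgood : ∀ r, r.Prime → r ∣ n → r ∉ ({2, 3, 7, 13} : Set ℕ) := by
    intro r hr hrn
    simp only [Set.mem_insert_iff, Set.mem_singleton_iff, not_or]
    refine ⟨?_, ?_, ?_, ?_⟩ <;> rintro rfl
    · exact Nat.not_even_iff_odd.mpr hodd (even_iff_two_dvd.mpr hrn)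
    · rcases Nat.prime_three.dvd_mul.mp (h ▸ hrn) with h3 | h3
      · exact absurd (h1 3 Nat.prime_three h3) (by norm_num)
      · exact absurd (h2 3 Nat.prime_three h3) (by norm_num)
    · exact h7 hrn
    · exact h13 hrn
  obtain ⟨hcard, hfree⟩ := hx
  rw [Fintype.card_fin] at hcard
  have hlower := not_hasWZS_cons (Nat.div_dvd_of_dvd hpn) hpn hcop hfree hxs
  refine ⟨?_, hlower⟩
  rw [Fintype.card_fin]
  refine (davA_eq_of_not_hasWZS (fun f => ?_) _ hlower).symm
  exact hasWZS_of_mul_prime hn hp (h2 p hp hpn2) (fun h => hgood p hp hpn (by simp [h])) hcop hsf'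
    (fun r hr hrd => hgood r hr (hrd.trans (Nat.div_dvd_of_dvd hpn)))
    (hasWZS_of_davA_eq hcard.symm) f
end

section
/- Let n = n_1 n_2 be a squarefree odd integer not divisible by 7 or 13, with n_1 a product of primes ≡ 1 (mod 3) and n_2 a product of primes ≡ 2 (mod 3). Let S be a sequence over Z/nZ of length ℓ = 2Ω(n_1) + Ω(n_2) and q a prime divisor of n_2. If every term of S is divisible by q, then S has a nonempty T_n-weighted zero-sum subsequence. -/
/-!
Modulo each prime `p ∣ n` other than `q`, record a term of `S` by a vector over `𝔽₂`: for
`p ≡ 1 (mod 3)` its cubic residue class, with `0 ↦ 0` and the three cosets of the cubes sent to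
the three nonzero vectors of `𝔽₂²`; for `p ≡ 2 (mod 3)` only whether it vanishes. These vectors
live in a space of dimension `2Ω(n₁) + Ω(n₂) - 1`, less than the length of `S`, so the vectors of
some nonempty subsequence add up to zero. Modulo each prime, this subsequence then carries unit
cube weights summing to zero: modulo `q` every term vanishes; for `p ≡ 2` every unit is a cube and
the number of nonzero terms is not `1`; for `p ≡ 1` the nonzero terms are absent, or two in the
same cubic class, or at least three, and then the weights are completed using that
`c₁ x³ + c₂ y³ = t` has a solution in units once `p > 16` (a Jacobi sum count, which
gives `p - 2 ≤ 6 + 2√p` otherwise). Since `n` is squarefree, the local weights glue by the Chinese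
remainder theorem.
-/

open Finset

open scoped Classical

-- `Tset n` is `unitCubes (ZMod n)` by definition.
def unitCubes (M : Type*) [Monoid M] : Set M := {x | ∃ u : Mˣ, (u : M) ^ 3 = x}

lemma one_mem_unitCubes {M : Type*} [Monoid M] : (1 : M) ∈ unitCubes M := ⟨1, by simp⟩

lemma neg_one_mem_unitCubes {R : Type*} [Ring R] : (-1 : R) ∈ unitCubes R :=
  ⟨-1, by simp [Odd.neg_one_pow (by decide : Odd 3)]⟩

lemma pow_three_mem_unitCubes {F : Type*} [Field F] {w : F} (hw : w ≠ 0) :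
    w ^ 3 ∈ unitCubes F :=
  ⟨Units.mk0 w hw, rfl⟩

lemma units_mem_unitCubes_of_coprime {M : Type*} [Monoid M] (h : (Nat.card Mˣ).Coprime 3)
    (u : Mˣ) : (u : M) ∈ unitCubes M :=
  ⟨(powCoprime h).symm u, by rw [← Units.val_pow_eq_pow_val, ← powCoprime_apply h,
    Equiv.apply_symm_apply]⟩

def HasWeightedZeroSumOn {ι R : Type*} [CommRing R] (A : Set R) (s : Finset ι) (y : ι → R) :
    Prop :=
  ∃ a : ι → R, (∀ i ∈ s, a i ∈ A) ∧ ∑ i ∈ s, a i * y i = 0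

namespace HasWeightedZeroSumOn

variable {ι : Type*}

lemma of_forall_eq_zero {R : Type*} [CommRing R] {A : Set R} (h1 : 1 ∈ A) {s : Finset ι}
    {y : ι → R} (hy : ∀ i ∈ s, y i = 0) : HasWeightedZeroSumOn A s y :=
  ⟨1, fun _ _ => h1, Finset.sum_eq_zero fun i hi => by rw [hy i hi, mul_zero]⟩

lemma of_filter_ne_zero {R : Type*} [CommRing R] {A : Set R} (h1 : 1 ∈ A) {s : Finset ι}
    {y : ι → R} (h : HasWeightedZeroSumOn A (s.filter (y · ≠ 0)) y) :
    HasWeightedZeroSumOn A s y := by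
  obtain ⟨a, ha, hsum⟩ := h
  refine ⟨fun i => if y i = 0 then 1 else a i, fun i hi => ?_, ?_⟩
  · dsimp only
    split_ifs with hyi
    · exact h1
    · exact ha i (mem_filter.2 ⟨hi, hyi⟩)
  · rw [Finset.sum_filter] at hsum
    refine Eq.trans (Finset.sum_congr rfl fun i _ => ?_) hsum
    split_ifs <;> simp_all

lemma of_erase {R : Type*} [CommRing R] {A : Set R} {s : Finset ι} {y : ι → R} {i : ι}
    (hi : i ∈ s) {c : ι → R} (hc : ∀ j ∈ s.erase i, c j ∈ A) {a : R} (ha : a ∈ A)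
    (h : a * y i + ∑ j ∈ s.erase i, c j * y j = 0) : HasWeightedZeroSumOn A s y := by
  refine ⟨Function.update c i a, fun j hj => ?_, ?_⟩
  · by_cases hji : j = i
    · rwa [hji, Function.update_self]
    · rw [Function.update_of_ne hji]
      exact hc j (mem_erase.2 ⟨hji, hj⟩)
  · rw [← Finset.add_sum_erase s _ hi, Function.update_self,
      Finset.sum_congr rfl fun j hj => by rw [Function.update_of_ne (ne_of_mem_erase hj)]]
    exact h

end HasWeightedZeroSumOn

section LocalSolvability

variable {ι F : Type*} [Field F] {s : Finset ι} {y : ι → F}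

lemma exists_weights_sum_ne_zero {A : Set F} (h1 : 1 ∈ A) {r : F} (hr : r ∈ A) (hr1 : r ≠ 1)
    (hs : s.Nonempty) (hy : ∀ i ∈ s, y i ≠ 0) :
    ∃ c : ι → F, (∀ i ∈ s, c i ∈ A) ∧ ∑ i ∈ s, c i * y i ≠ 0 := by
  by_cases hsum : ∑ i ∈ s, y i = 0
  · obtain ⟨j, hj⟩ := hs
    refine ⟨Function.update 1 j r, fun i _ => ?_, ?_⟩
    · by_cases hij : i = j
      · rwa [hij, Function.update_self]
      · rwa [Function.update_of_ne hij]
    · have hrest := Finset.add_sum_erase s y hj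
      rw [← Finset.add_sum_erase s _ hj, Function.update_self,
        Finset.sum_congr rfl fun i hi => by
          rw [Function.update_of_ne (ne_of_mem_erase hi), Pi.one_apply, one_mul]]
      have hdiff : r * y j + ∑ i ∈ s.erase j, y i = (r - 1) * y j := by
        linear_combination hrest + hsum
      rw [hdiff]
      exact mul_ne_zero (sub_ne_zero.2 hr1) (hy j hj)
  · exact ⟨1, fun _ _ => h1, by simpa using hsum⟩

namespace HasWeightedZeroSumOn

lemma of_card_ne_one {A : Set F} (hA : ∀ z : F, z ≠ 0 → z ∈ A) (hneg : (-1 : F) ≠ 1)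
    (hy : ∀ i ∈ s, y i ≠ 0) (hs : s.card ≠ 1) : HasWeightedZeroSumOn A s y := by
  rcases s.eq_empty_or_nonempty with rfl | ⟨i, hi⟩
  · exact of_forall_eq_zero (hA 1 one_ne_zero) (by simp)
  have hrest : (s.erase i).Nonempty := by
    rw [← card_pos, card_erase_of_mem hi]
    have := card_pos.2 ⟨i, hi⟩
    omega
  obtain ⟨c, hc, hsum⟩ := exists_weights_sum_ne_zero (hA 1 one_ne_zero)
    (hA (-1) (neg_ne_zero.2 one_ne_zero)) hneg hrest fun j hj => hy j (mem_of_mem_erase hj)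
  refine of_erase hi hc (hA _ (div_ne_zero (neg_ne_zero.2 hsum) (hy i hi))) ?_
  rw [div_mul_cancel₀ _ (hy i hi), neg_add_cancel]

lemma of_sum_indicator_eq_zero {A : Set F} (hA : ∀ z : F, z ≠ 0 → z ∈ A) (hneg : (-1 : F) ≠ 1)
    (hsum : ∑ i ∈ s, (if y i ≠ 0 then 1 else 0 : ZMod 2) = 0) : HasWeightedZeroSumOn A s y := by
  refine of_filter_ne_zero (hA 1 one_ne_zero)
    (of_card_ne_one hA hneg (fun i hi => (mem_filter.1 hi).2) fun h1 => ?_)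
  rw [← Finset.natCast_card_filter, h1, Nat.cast_one] at hsum
  exact one_ne_zero hsum

lemma of_pair {i j : ι} (hij : i ≠ j) (hyi : y i ≠ 0) {w : F} (hw : w ≠ 0)
    (hcube : w ^ 3 = y j / y i) : HasWeightedZeroSumOn (unitCubes F) {i, j} y := by
  refine of_erase (mem_insert_self i {j}) (c := 1) (fun _ _ => one_mem_unitCubes)
    (pow_three_mem_unitCubes (neg_ne_zero.2 hw)) ?_
  rw [erase_insert (by simpa using hij), sum_singleton, Odd.neg_pow (by decide), hcube,
    Pi.one_apply, one_mul, neg_mul, div_mul_cancel₀ _ hyi, neg_add_cancel]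

lemma of_three_le_card (hneg : (-1 : F) ≠ 1)
    (hrep : ∀ c₁ c₂ t : F, c₁ ≠ 0 → c₂ ≠ 0 → t ≠ 0 →
      ∃ x₁ x₂ : F, x₁ ≠ 0 ∧ x₂ ≠ 0 ∧ c₁ * x₁ ^ 3 + c₂ * x₂ ^ 3 = t)
    (hy : ∀ i ∈ s, y i ≠ 0) (hs : 3 ≤ s.card) : HasWeightedZeroSumOn (unitCubes F) s y := by
  obtain ⟨i₁, hi₁⟩ := card_pos.1 (by omega : 0 < s.card)
  obtain ⟨i₂, hi₂⟩ := card_pos.1 (by rw [card_erase_of_mem hi₁]; omega : 0 < (s.erase i₁).card)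
  have hrest : ((s.erase i₁).erase i₂).Nonempty :=
    card_pos.1 (by rw [card_erase_of_mem hi₂, card_erase_of_mem hi₁]; omega)
  obtain ⟨c, hc, hsum⟩ := exists_weights_sum_ne_zero one_mem_unitCubes neg_one_mem_unitCubes
    hneg hrest fun j hj => hy j (mem_of_mem_erase (mem_of_mem_erase hj))
  obtain ⟨x₁, x₂, hx₁, hx₂, hx⟩ := hrep (y i₁) (y i₂) _ (hy i₁ hi₁)
    (hy i₂ (mem_of_mem_erase hi₂)) (neg_ne_zero.2 hsum)
  refine of_erase hi₁ (c := Function.update c i₂ (x₂ ^ 3)) (fun j hj => ?_)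
    (pow_three_mem_unitCubes hx₁) ?_
  · by_cases hji : j = i₂
    · rw [hji, Function.update_self]
      exact pow_three_mem_unitCubes hx₂
    · rw [Function.update_of_ne hji]
      exact hc j (mem_erase.2 ⟨hji, hj⟩)
  · rw [← Finset.add_sum_erase _ _ hi₂, Function.update_self,
      Finset.sum_congr rfl fun j hj => by rw [Function.update_of_ne (ne_of_mem_erase hj)]]
    linear_combination hx

end HasWeightedZeroSumOn

end LocalSolvability

section CubicCharacter

variable {F : Type*} [Field F] [Fintype F]

lemma MulChar.norm_apply_le_one (χ : MulChar F ℂ) (a : F) : ‖χ a‖ ≤ 1 := by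
  by_cases ha : IsUnit a
  · refine ((pow_eq_one_iff_of_nonneg (norm_nonneg _) (Fintype.card_ne_zero (α := Fˣ))).mp ?_).le
    rw [← norm_pow, ← map_pow, ← ha.unit_spec, ← Units.val_pow_eq_pow_val, pow_card_eq_one,
      Units.val_one, map_one, norm_one]
  · rw [χ.map_nonunit ha, norm_zero]
    exact zero_le_one

lemma norm_jacobiSum_self {φ : MulChar F ℂ} (hφ : φ ≠ 1) (hφφ : φ * φ ≠ 1) :
    ‖jacobiSum φ φ‖ = √(Fintype.card F) := by
  have hchar : ringChar ℂ ≠ ringChar F := by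
    rw [ringChar.eq_zero]
    exact (CharP.ringChar_ne_zero_of_finite F).symm
  have h := jacobiSum_mul_jacobiSum_inv hchar hφ hφ hφφ
  have hconj : jacobiSum φ⁻¹ φ⁻¹ = starRingEnd ℂ (jacobiSum φ φ) := by
    simp only [jacobiSum, map_sum, map_mul, starRingEnd_apply, MulChar.star_apply']
  rw [hconj, Complex.mul_conj, ← Complex.ofReal_natCast, Complex.ofReal_inj,
    Complex.normSq_eq_norm_sq] at h
  rw [← h, Real.sqrt_sq (norm_nonneg _)]

structure IsCubicResidueChar (χ : MulChar F ℂ) : Prop where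
  ne_one : χ ≠ 1
  pow_three : χ ^ 3 = 1
  apply_eq_one_iff {z : F} : z ≠ 0 → (χ z = 1 ↔ ∃ w, w ^ 3 = z)

lemma exists_isCubicResidueChar (h : 3 ∣ Fintype.card F - 1) :
    ∃ χ : MulChar F ℂ, IsCubicResidueChar χ := by
  obtain ⟨χ, hχ⟩ := MulChar.exists_mulChar_orderOf F h
    (Complex.isPrimitiveRoot_exp 3 three_ne_zero)
  have hne : χ ≠ 1 := by rintro rfl; simp at hχ
  have h3 : χ ^ 3 = 1 := hχ ▸ pow_orderOf_eq_one χ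
  refine ⟨χ, hne, h3, fun {z} hz => ⟨fun hχz => ?_, ?_⟩⟩
  · obtain ⟨g, hg⟩ := IsCyclic.exists_generator (α := Fˣ)
    have hpow : ∀ u : Fˣ, ∃ k : ℕ, g ^ k = u := fun u => mem_powers_iff_mem_zpowers.mpr (hg u)
    have hχg : χ g ≠ 1 := fun h1 => hne <| MulChar.ext fun u => by
      obtain ⟨k, rfl⟩ := hpow u
      simp [h1]
    have hord : orderOf (χ g) = 3 := by
      refine orderOf_eq_prime ?_ hχg
      rw [← MulChar.pow_apply' χ three_ne_zero, h3, MulChar.one_apply_coe]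
    obtain ⟨k, hk⟩ := hpow (Units.mk0 z hz)
    have hzk : z = (g : F) ^ k := by rw [← Units.val_pow_eq_pow_val, hk, Units.val_mk0]
    obtain ⟨m, rfl⟩ : 3 ∣ k := by
      rw [← hord, orderOf_dvd_iff_pow_eq_one, ← map_pow, ← hzk, hχz]
    exact ⟨(g : F) ^ m, by rw [hzk, ← pow_mul, mul_comm]⟩
  · rintro ⟨w, rfl⟩
    rw [map_pow, ← MulChar.pow_apply' χ three_ne_zero, h3,
      MulChar.one_apply (pow_ne_zero_iff three_ne_zero |>.mp hz).isUnit]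

lemma IsCubicResidueChar.three_dvd_card_sub_one {χ : MulChar F ℂ} (hχ : IsCubicResidueChar χ) :
    3 ∣ Fintype.card F - 1 :=
  orderOf_eq_prime hχ.pow_three hχ.ne_one ▸ MulChar.orderOf_dvd_card_sub_one F χ

end CubicCharacter

section BinaryCubicForm

variable {F : Type*} [Field F]

lemma MulChar.sum_range_three_pow_apply_eq_zero {χ : MulChar F ℂ} (h3 : χ ^ 3 = 1) {z : F}
    (hz : χ z ≠ 1) : ∑ j ∈ range 3, (χ ^ j) z = 0 := by
  by_cases hz0 : z = 0
  · simp [hz0]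
  have hcube : χ z ^ 3 = 1 := by
    rw [← MulChar.pow_apply' χ three_ne_zero, h3, MulChar.one_apply (Ne.isUnit hz0)]
  have hroot : (χ z - 1) * (1 + χ z + χ z ^ 2) = 0 := by linear_combination hcube
  simp only [Finset.sum_range_succ, Finset.sum_range_zero, zero_add, pow_zero, pow_one,
    MulChar.one_apply (Ne.isUnit hz0), MulChar.pow_apply' χ two_ne_zero]
  exact (mul_eq_zero.mp hroot).resolve_left (sub_ne_zero.mpr hz)

lemma sum_mul_sum_eq_sum_jacobiSum [Fintype F] {R : Type*} [CommRing R] {ι κ : Type*} (s : Finset ι)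
    (t : Finset κ) (φ : ι → MulChar F R) (ψ : κ → MulChar F R) (a b : F) :
    ∑ w : F, (∑ j ∈ s, φ j (a * w)) * (∑ k ∈ t, ψ k (b * (1 - w))) =
      ∑ j ∈ s, ∑ k ∈ t, φ j a * ψ k b * jacobiSum (φ j) (ψ k) := by
  simp_rw [Finset.sum_mul_sum, jacobiSum, Finset.mul_sum, map_mul]
  rw [Finset.sum_comm]
  refine Finset.sum_congr rfl fun j _ => ?_
  rw [Finset.sum_comm]
  exact Finset.sum_congr rfl fun k _ => Finset.sum_congr rfl fun w _ => by ring

lemma norm_jacobiSum_pow_pow_le [Fintype F] {χ : MulChar F ℂ} (hne : χ ≠ 1) (h3 : χ ^ 3 = 1)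
    {j k : ℕ} (hj : j < 3) (hk : k < 3) (hjk : (j, k) ≠ (0, 0)) :
    ‖jacobiSum (χ ^ j) (χ ^ k)‖ ≤ if j = k then √(Fintype.card F) else 1 := by
  have hsq : χ ^ 2 ≠ 1 := fun h => hne (by rw [← h3, pow_succ, h, one_mul])
  have hinv : χ ^ 2 = χ⁻¹ := eq_inv_of_mul_eq_one_left (by rw [← pow_succ, h3])
  have hfour : χ ^ 2 * χ ^ 2 ≠ 1 := by rwa [← pow_add, pow_succ, h3, one_mul]
  have hneg : ‖χ (-1)‖ ≤ 1 := χ.norm_apply_le_one _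
  interval_cases j <;> interval_cases k
  · exact absurd rfl hjk
  · simp [jacobiSum_one_nontrivial hne]
  · simp [jacobiSum_one_nontrivial hsq]
  · simp [jacobiSum_comm _ (1 : MulChar F ℂ), jacobiSum_one_nontrivial hne]
  · simp [norm_jacobiSum_self hne (by rwa [← sq])]
  · simpa [hinv, jacobiSum_nontrivial_inv hne] using hneg
  · simp [jacobiSum_comm _ (1 : MulChar F ℂ), jacobiSum_one_nontrivial hsq]
  · simpa [jacobiSum_comm _ χ, hinv, jacobiSum_nontrivial_inv hne] using hneg
  · simp [norm_jacobiSum_self hsq hfour]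

lemma card_sub_two_le_of_sum_jacobiSum_eq_zero [Fintype F] {χ : MulChar F ℂ} (hne : χ ≠ 1)
    (h3 : χ ^ 3 = 1) {α β : F} (hα : α ≠ 0) (hβ : β ≠ 0)
    (h : ∑ j ∈ range 3, ∑ k ∈ range 3, (χ ^ j) α * (χ ^ k) β * jacobiSum (χ ^ j) (χ ^ k) = 0) :
    (Fintype.card F : ℝ) - 2 ≤ 6 + 2 * √(Fintype.card F) := by
  set q := Fintype.card F
  set f : ℕ × ℕ → ℂ := fun jk => (χ ^ jk.1) α * (χ ^ jk.2) β * jacobiSum (χ ^ jk.1) (χ ^ jk.2)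
  set T := range 3 ×ˢ range 3
  set b : ℕ × ℕ → ℝ := fun jk => if jk.1 = jk.2 then √q else 1
  have hT : (0, 0) ∈ T := by simp [T]
  have h00 : f (0, 0) = ((q - 2 : ℝ) : ℂ) := by
    simp [f, MulChar.one_apply hα.isUnit, MulChar.one_apply hβ.isUnit, jacobiSum_one_one, q]
  have hrest : f (0, 0) = -∑ jk ∈ T.erase (0, 0), f jk := by
    rw [eq_neg_iff_add_eq_zero, Finset.add_sum_erase T f hT, Finset.sum_product]
    exact h
  have hterm : ∀ jk ∈ T.erase (0, 0), ‖f jk‖ ≤ b jk := by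
    rintro ⟨j, k⟩ hjk
    simp only [T, Finset.mem_erase, Finset.mem_product, Finset.mem_range] at hjk
    calc ‖f (j, k)‖ ≤ 1 * 1 * ‖jacobiSum (χ ^ j) (χ ^ k)‖ := by
          simp only [f, norm_mul]
          gcongr <;> exact MulChar.norm_apply_le_one _ _
      _ ≤ b (j, k) := by simpa using norm_jacobiSum_pow_pow_le hne h3 hjk.2.1 hjk.2.2 hjk.1
  have hb : ∑ jk ∈ T.erase (0, 0), b jk = 6 + 2 * √q := by
    rw [Finset.sum_erase_eq_sub hT, Finset.sum_product]
    simp [b, Finset.sum_range_succ]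
    ring
  have hq : (2 : ℝ) ≤ q := by exact_mod_cast Fintype.one_lt_card
  calc (q : ℝ) - 2 = ‖f (0, 0)‖ := by
        rw [h00, Complex.norm_real, Real.norm_of_nonneg (by linarith)]
    _ ≤ ∑ jk ∈ T.erase (0, 0), ‖f jk‖ := by rw [hrest, norm_neg]; exact norm_sum_le _ _
    _ ≤ 6 + 2 * √q := hb ▸ Finset.sum_le_sum hterm

theorem exists_mul_cube_add_mul_cube_eq [Fintype F] (h3 : 3 ∣ Fintype.card F - 1)
    (hF : 16 < Fintype.card F) {c₁ c₂ t : F} (hc₁ : c₁ ≠ 0) (hc₂ : c₂ ≠ 0) (ht : t ≠ 0) :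
    ∃ x₁ x₂ : F, x₁ ≠ 0 ∧ x₂ ≠ 0 ∧ c₁ * x₁ ^ 3 + c₂ * x₂ ^ 3 = t := by
  obtain ⟨χ, hχ⟩ := exists_isCubicResidueChar h3
  by_contra! hno
  have hroot : ∀ {z : F}, χ z = 1 → ∃ x, x ≠ 0 ∧ x ^ 3 = z := fun {z} hz => by
    have hz0 : z ≠ 0 := by rintro rfl; simp [MulChar.map_zero] at hz
    obtain ⟨x, rfl⟩ := (hχ.apply_eq_one_iff hz0).1 hz
    exact ⟨x, by rintro rfl; simp at hz0, rfl⟩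
  -- A solution amounts to a `w` with `t w / c₁` and `t (1 - w) / c₂` nonzero cubes, and
  -- `∑ j < 3, χ ^ j` vanishes away from the nonzero cubes.
  have hvanish : ∀ w : F, (∑ j ∈ range 3, (χ ^ j) (t / c₁ * w)) *
      (∑ k ∈ range 3, (χ ^ k) (t / c₂ * (1 - w))) = 0 := by
    intro w
    by_cases h₁ : χ (t / c₁ * w) = 1
    · by_cases h₂ : χ (t / c₂ * (1 - w)) = 1
      · obtain ⟨x₁, hx₁, hx₁w⟩ := hroot h₁
        obtain ⟨x₂, hx₂, hx₂w⟩ := hroot h₂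
        refine absurd ?_ (hno x₁ x₂ hx₁ hx₂)
        rw [hx₁w, hx₂w]
        field_simp
        ring
      · rw [MulChar.sum_range_three_pow_apply_eq_zero hχ.pow_three h₂, mul_zero]
    · rw [MulChar.sum_range_three_pow_apply_eq_zero hχ.pow_three h₁, zero_mul]
  have hjac := sum_mul_sum_eq_sum_jacobiSum (range 3) (range 3) (χ ^ ·) (χ ^ ·) (t / c₁) (t / c₂)
  rw [Finset.sum_eq_zero fun w _ => hvanish w] at hjac
  have hle := card_sub_two_le_of_sum_jacobiSum_eq_zero hχ.ne_one hχ.pow_three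
    (div_ne_zero ht hc₁) (div_ne_zero ht hc₂) hjac.symm
  have hsqrt : √(Fintype.card F : ℝ) ^ 2 = Fintype.card F := Real.sq_sqrt (Nat.cast_nonneg _)
  have hF' : (16 : ℝ) < Fintype.card F := by exact_mod_cast hF
  nlinarith [Real.sqrt_nonneg (Fintype.card F : ℝ)]

end BinaryCubicForm

section CubeRootCode

noncomputable def cubeRootCode (ω w : ℂ) : ZMod 2 × ZMod 2 :=
  if w = 0 then 0 else if w = 1 then (0, 1) else if w = ω then (1, 0) else (1, 1)

variable {ω : ℂ}

lemma cubeRootCode_zero : cubeRootCode ω 0 = 0 := by simp [cubeRootCode]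

lemma cubeRootCode_cases (hω : IsPrimitiveRoot ω 3) {w : ℂ} (hw : w ^ 3 = 1) :
    (w = 1 ∧ cubeRootCode ω w = (0, 1)) ∨ (w = ω ∧ cubeRootCode ω w = (1, 0)) ∨
      (w = ω ^ 2 ∧ cubeRootCode ω w = (1, 1)) := by
  have h0 : ω ≠ 0 := hω.ne_zero three_ne_zero
  have h1 : ω ≠ 1 := hω.ne_one (by norm_num)
  have h2 : ω ^ 2 ≠ 1 := hω.pow_ne_one_of_pos_of_lt two_ne_zero (by norm_num)
  have h21 : ω ^ 2 ≠ ω := fun h => h1 (mul_left_cancel₀ h0 (by rw [← sq, h, mul_one]))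
  obtain ⟨k, hk, rfl⟩ := hω.eq_pow_of_pow_eq_one hw
  interval_cases k <;> simp [cubeRootCode, h0, h1, h2, h21]

lemma cubeRootCode_ne_zero (hω : IsPrimitiveRoot ω 3) {w : ℂ} (hw : w ^ 3 = 1) :
    cubeRootCode ω w ≠ 0 := by
  rcases cubeRootCode_cases hω hw with ⟨-, h⟩ | ⟨-, h⟩ | ⟨-, h⟩ <;> rw [h] <;> decide

lemma eq_of_cubeRootCode_eq (hω : IsPrimitiveRoot ω 3) {w w' : ℂ} (hw : w ^ 3 = 1)
    (hw' : w' ^ 3 = 1) (h : cubeRootCode ω w = cubeRootCode ω w') : w = w' := by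
  rcases cubeRootCode_cases hω hw with ⟨rfl, e⟩ | ⟨rfl, e⟩ | ⟨rfl, e⟩ <;>
    rcases cubeRootCode_cases hω hw' with ⟨rfl, e'⟩ | ⟨rfl, e'⟩ | ⟨rfl, e'⟩ <;>
    first | rfl | (rw [e, e'] at h; exact absurd h (by decide))

end CubeRootCode

namespace HasWeightedZeroSumOn

variable {ι F : Type*} [Field F] {s : Finset ι} {y : ι → F}

lemma of_sum_cubeRootCode_eq_zero [Fintype F] (hF : 16 < Fintype.card F)
    (hneg : (-1 : F) ≠ 1) {χ : MulChar F ℂ} (hχ : IsCubicResidueChar χ) {ω : ℂ}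
    (hω : IsPrimitiveRoot ω 3) (hsum : ∑ i ∈ s, cubeRootCode ω (χ (y i)) = 0) :
    HasWeightedZeroSumOn (unitCubes F) s y := by
  refine of_filter_ne_zero one_mem_unitCubes ?_
  set K := s.filter (y · ≠ 0) with hK
  have hyK : ∀ i ∈ K, y i ≠ 0 := fun i hi => (mem_filter.1 hi).2
  have hcube : ∀ i ∈ K, χ (y i) ^ 3 = 1 := fun i hi => by
    rw [← MulChar.pow_apply' χ three_ne_zero, hχ.pow_three, MulChar.one_apply (hyK i hi).isUnit]
  have hsumK : ∑ i ∈ K, cubeRootCode ω (χ (y i)) = 0 := by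
    rw [hK, Finset.sum_filter_of_ne (p := (y · ≠ 0)) fun i _ hi hyi =>
      hi (by rw [hyi, MulChar.map_zero, cubeRootCode_zero])]
    exact hsum
  rcases (by omega : K.card = 0 ∨ K.card = 1 ∨ K.card = 2 ∨ 3 ≤ K.card) with h0 | h1 | h2 | h3
  · rw [card_eq_zero.1 h0]
    exact of_forall_eq_zero one_mem_unitCubes (by simp)
  · obtain ⟨i, hi⟩ := card_eq_one.1 h1
    rw [hi, sum_singleton] at hsumK
    exact absurd hsumK (cubeRootCode_ne_zero hω (hcube i (hi ▸ mem_singleton_self i)))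
  · obtain ⟨i, j, hij, hKij⟩ := card_eq_two.1 h2
    have hi : i ∈ K := hKij ▸ mem_insert_self i {j}
    have hj : j ∈ K := hKij ▸ mem_insert_of_mem (mem_singleton_self j)
    rw [hKij, sum_pair hij] at hsumK
    have hχij : χ (y i) = χ (y j) := eq_of_cubeRootCode_eq hω (hcube i hi) (hcube j hj)
      ((by decide : ∀ a b : ZMod 2 × ZMod 2, a + b = 0 → a = b) _ _ hsumK)
    have hχi : χ (y i) ≠ 0 := fun h => by simpa [h] using hcube i hi
    have hratio : χ (y j / y i) = 1 := by
      have h := map_mul χ (y j / y i) (y i)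
      rw [div_mul_cancel₀ _ (hyK i hi), ← hχij] at h
      exact (mul_eq_right₀ hχi).1 h.symm
    obtain ⟨w, hw⟩ := (hχ.apply_eq_one_iff (div_ne_zero (hyK j hj) (hyK i hi))).1 hratio
    rw [hKij]
    exact of_pair hij (hyK i hi) (by
      rintro rfl
      exact div_ne_zero (hyK j hj) (hyK i hi) (by simpa using hw.symm)) hw
  · exact of_three_le_card hneg (fun _ _ _ => exists_mul_cube_add_mul_cube_eq
      hχ.three_dvd_card_sub_one hF) hyK h3

end HasWeightedZeroSumOn

theorem exists_nonempty_sum_eq_zero_of_finrank_lt {ι V : Type*} [Fintype ι] [AddCommGroup V]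
    [Module (ZMod 2) V] [Module.Finite (ZMod 2) V] (v : ι → V)
    (h : Module.finrank (ZMod 2) V < Fintype.card ι) :
    ∃ J : Finset ι, J.Nonempty ∧ ∑ i ∈ J, v i = 0 := by
  obtain ⟨g, hg, i, hi⟩ := (Fintype.not_linearIndependent_iff (v := v)).1 fun hv =>
    h.not_ge hv.fintype_card_le_finrank
  refine ⟨univ.filter (g · ≠ 0), ⟨i, by simpa using hi⟩, ?_⟩
  calc ∑ j ∈ univ.filter (g · ≠ 0), v j = ∑ j ∈ univ.filter (g · ≠ 0), g j • v j :=
        Finset.sum_congr rfl fun j hj => by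
          rw [(by decide : ∀ a : ZMod 2, a ≠ 0 → a = 1) _ (mem_filter.1 hj).2, one_smul]
    _ = ∑ j, g j • v j := Finset.sum_filter_of_ne fun j _ hj hgj => hj (by rw [hgj, zero_smul])
    _ = 0 := hg

lemma finrank_pi_prod_prod_pi (K ι κ : Type*) [Field K] [Fintype ι] [Fintype κ] :
    Module.finrank K ((ι → K × K) × (κ → K)) = 2 * Fintype.card ι + Fintype.card κ := by
  simp only [Module.finrank_prod, Module.finrank_pi_fintype, Module.finrank_self,
    Finset.sum_const, card_univ, smul_eq_mul]
  ring

section SquarefreeModulus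

variable {n : ℕ}

lemma ZMod.exists_castHom_eq (hn : n ≠ 0) (r : (p : ℕ) → ZMod p) :
    ∃ x : ZMod n, ∀ p, p.Prime → ∀ hp : p ∣ n, ZMod.castHom hp (ZMod p) x = r p := by
  have hpr : ∀ p ∈ n.primeFactors, p.Prime := fun p hp => Nat.prime_of_mem_primeFactors hp
  obtain ⟨k, hk⟩ := Nat.chineseRemainderOfFinset (fun p => (r p).val) id n.primeFactors
    (fun p hp => (hpr p hp).ne_zero)
    (fun p hp p' hp' hne => (Nat.coprime_primes (hpr p hp) (hpr p' hp')).2 hne)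
  refine ⟨k, fun p hp hpn => ?_⟩
  have : NeZero p := ⟨hp.ne_zero⟩
  rw [map_natCast, ← ZMod.natCast_zmod_val (r p)]
  exact (ZMod.natCast_eq_natCast_iff _ _ _).2 (hk p (Nat.mem_primeFactors.2 ⟨hp, hpn, hn⟩))

lemma ZMod.eq_zero_of_forall_castHom_eq_zero (hn : Squarefree n) {x : ZMod n}
    (h : ∀ p, p.Prime → ∀ hp : p ∣ n, ZMod.castHom hp (ZMod p) x = 0) : x = 0 := by
  have : NeZero n := ⟨hn.ne_zero⟩
  have hdvd : ∏ p ∈ n.primeFactors, p ∣ x.val :=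
    Finset.prod_primes_dvd _ (fun p hp => (Nat.prime_of_mem_primeFactors hp).prime) fun p hp => by
      have hx := h p (Nat.prime_of_mem_primeFactors hp) (Nat.dvd_of_mem_primeFactors hp)
      rwa [ZMod.castHom_apply, ← ZMod.natCast_val, ZMod.natCast_eq_zero_iff] at hx
  rw [Nat.prod_primeFactors_of_squarefree hn] at hdvd
  rwa [← ZMod.natCast_zmod_val x, ZMod.natCast_eq_zero_iff]

lemma ZMod.isUnit_of_forall_castHom_ne_zero (hn : n ≠ 0) {x : ZMod n}
    (h : ∀ p, p.Prime → ∀ hp : p ∣ n, ZMod.castHom hp (ZMod p) x ≠ 0) : IsUnit x := by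
  have : NeZero n := ⟨hn⟩
  rw [← ZMod.natCast_zmod_val x, ZMod.isUnit_iff_coprime]
  refine Nat.coprime_of_dvd fun p hp hpx hpn => h p hp hpn ?_
  rwa [ZMod.castHom_apply, ← ZMod.natCast_val, ZMod.natCast_eq_zero_iff]

lemma exists_mem_unitCubes_castHom_eq (hn : n ≠ 0) (a : (p : ℕ) → ZMod p)
    (ha : ∀ p, p.Prime → p ∣ n → a p ∈ unitCubes (ZMod p)) :
    ∃ b ∈ unitCubes (ZMod n), ∀ p, p.Prime → ∀ hp : p ∣ n, ZMod.castHom hp (ZMod p) b = a p := by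
  have hroot : ∀ p, ∃ u : ZMod p, p.Prime → p ∣ n → u ≠ 0 ∧ u ^ 3 = a p := fun p => by
    by_cases hp : p.Prime ∧ p ∣ n
    · obtain ⟨u, hu⟩ := ha p hp.1 hp.2
      have := Fact.mk hp.1
      exact ⟨u, fun _ _ => ⟨u.ne_zero, hu⟩⟩
    · exact ⟨0, fun h₁ h₂ => absurd ⟨h₁, h₂⟩ hp⟩
  choose u hu using hroot
  obtain ⟨x, hx⟩ := ZMod.exists_castHom_eq hn u
  have hxu : IsUnit x := ZMod.isUnit_of_forall_castHom_ne_zero hn fun p hp hpn => by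
    rw [hx p hp hpn]
    exact (hu p hp hpn).1
  exact ⟨x ^ 3, ⟨hxu.unit, rfl⟩, fun p hp hpn => by rw [map_pow, hx p hp hpn, (hu p hp hpn).2]⟩

theorem HasWeightedZeroSumOn.of_forall_prime_dvd {ι : Type*} (hn : Squarefree n)
    {s : Finset ι} {x : ι → ZMod n}
    (h : ∀ p, p.Prime → ∀ hp : p ∣ n,
      HasWeightedZeroSumOn (unitCubes (ZMod p)) s fun i => ZMod.castHom hp (ZMod p) (x i)) :
    HasWeightedZeroSumOn (unitCubes (ZMod n)) s x := by
  choose! a ha hsum using h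
  have hb : ∀ i ∈ s, ∃ b ∈ unitCubes (ZMod n),
      ∀ p, p.Prime → ∀ hp : p ∣ n, ZMod.castHom hp (ZMod p) b = a p i :=
    fun i hi => exists_mem_unitCubes_castHom_eq hn.ne_zero (a · i) fun p hp hpn => ha p hp hpn i hi
  choose! b hbA hb using hb
  refine ⟨b, hbA, ZMod.eq_zero_of_forall_castHom_eq_zero hn fun p hp hpn => ?_⟩
  rw [map_sum, ← hsum p hp hpn]
  exact Finset.sum_congr rfl fun i hi => by rw [map_mul, hb i hi p hp hpn]

lemma ZMod.hasWeightedZeroSumOn_castHom_of_dvd {ι : Type*} {p : ℕ} (hp : p ∣ n)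
    {s : Finset ι} {x : ι → ZMod n} (hx : ∀ i ∈ s, (p : ZMod n) ∣ x i) :
    HasWeightedZeroSumOn (unitCubes (ZMod p)) s fun i => ZMod.castHom hp (ZMod p) (x i) :=
  .of_forall_eq_zero one_mem_unitCubes fun i hi => by
    obtain ⟨c, hc⟩ := hx i hi
    rw [hc, map_mul, map_natCast, ZMod.natCast_self, zero_mul]

end SquarefreeModulus

section PrimeModulus

variable {ι : Type*} {p : ℕ} [Fact p.Prime] {s : Finset ι} {y : ι → ZMod p}

lemma ZMod.exists_isCubicResidueChar (hp : p % 3 = 1) :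
    ∃ χ : MulChar (ZMod p) ℂ, IsCubicResidueChar χ :=
  _root_.exists_isCubicResidueChar (by rw [ZMod.card]; omega)

lemma ZMod.hasWeightedZeroSumOn_of_mod_three_eq_one (hp : p % 3 = 1) (hp7 : p ≠ 7)
    (hp13 : p ≠ 13) {χ : MulChar (ZMod p) ℂ} (hχ : IsCubicResidueChar χ) {ω : ℂ}
    (hω : IsPrimitiveRoot ω 3) (hsum : ∑ i ∈ s, cubeRootCode ω (χ (y i)) = 0) :
    HasWeightedZeroSumOn (unitCubes (ZMod p)) s y := by
  have hprime : p.Prime := Fact.out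
  have hbig : 16 < p := by
    by_contra! hle
    interval_cases p <;> simp_all +decide
  have : Fact (2 < p) := ⟨by omega⟩
  exact .of_sum_cubeRootCode_eq_zero (by rwa [ZMod.card]) ZMod.neg_one_ne_one hχ hω hsum

lemma ZMod.hasWeightedZeroSumOn_of_mod_three_eq_two (hp : p % 3 = 2) (hp2 : p ≠ 2)
    (hsum : ∑ i ∈ s, (if y i ≠ 0 then 1 else 0 : ZMod 2) = 0) :
    HasWeightedZeroSumOn (unitCubes (ZMod p)) s y := by
  have : Fact (2 < p) := ⟨(Fact.out : p.Prime).two_le.lt_of_ne' hp2⟩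
  have hcop : (Nat.card (ZMod p)ˣ).Coprime 3 := by
    rw [Nat.card_eq_fintype_card, ZMod.card_units]
    exact ((Nat.Prime.coprime_iff_not_dvd Nat.prime_three).2 (by omega)).symm
  exact .of_sum_indicator_eq_zero (fun z hz => units_mem_unitCubes_of_coprime hcop (.mk0 z hz))
    ZMod.neg_one_ne_one (by convert hsum)

end PrimeModulus

lemma card_primeFactors_eq_Omega {m : ℕ} (hm : Squarefree m) : m.primeFactors.card = Omega m := by
  rw [Omega, Nat.primeFactors, List.toFinset_card_of_nodup
    ((Nat.squarefree_iff_nodup_primeFactorsList hm.ne_zero).1 hm)]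

theorem stmt15 (n n1 n2 : ℕ) (h : n = n1 * n2) (hsf : Squarefree n) (hodd : Odd n)
    (h7 : ¬ (7 ∣ n)) (h13 : ¬ (13 ∣ n))
    (h1 : ∀ p : ℕ, p.Prime → p ∣ n1 → p % 3 = 1)
    (h2 : ∀ q : ℕ, q.Prime → q ∣ n2 → q % 3 = 2)
    (q : ℕ) (hq : q.Prime) (hqn2 : q ∣ n2)
    (S : Fin (2 * Omega n1 + Omega n2) → ZMod n)
    (hdvd : ∀ i, (q : ZMod n) ∣ S i) :
    HasWZS (Tset n) S := by
  have hsf₁ : Squarefree n1 := hsf.squarefree_of_dvd (h ▸ dvd_mul_right n1 n2)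
  have hsf₂ : Squarefree n2 := hsf.squarefree_of_dvd (h ▸ dvd_mul_left n2 n1)
  have hq₂ : q ∈ n2.primeFactors := Nat.mem_primeFactors.2 ⟨hq, hqn2, hsf₂.ne_zero⟩
  choose! χ hχ using fun p (hp : p ∈ n1.primeFactors) =>
    have := Fact.mk (Nat.prime_of_mem_primeFactors hp)
    ZMod.exists_isCubicResidueChar (h1 p (Nat.prime_of_mem_primeFactors hp)
      (Nat.dvd_of_mem_primeFactors hp))
  obtain ⟨ω, hω⟩ : ∃ ω : ℂ, IsPrimitiveRoot ω 3 := ⟨_, Complex.isPrimitiveRoot_exp 3 three_ne_zero⟩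
  let code (x : ZMod n) :
      (n1.primeFactors → ZMod 2 × ZMod 2) × (n2.primeFactors.erase q → ZMod 2) :=
    (fun p => cubeRootCode ω (χ p x.cast), fun p => if (x.cast : ZMod p) ≠ 0 then 1 else 0)
  obtain ⟨J, hJ, hsum⟩ := exists_nonempty_sum_eq_zero_of_finrank_lt (code ∘ S) (by
    have := card_primeFactors_eq_Omega hsf₂ ▸ card_pos.2 ⟨q, hq₂⟩
    rw [finrank_pi_prod_prod_pi, Fintype.card_coe, Fintype.card_coe, card_erase_of_mem hq₂,
      card_primeFactors_eq_Omega hsf₁, card_primeFactors_eq_Omega hsf₂, Fintype.card_fin]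
    omega)
  refine ⟨J, hJ, HasWeightedZeroSumOn.of_forall_prime_dvd hsf fun p hp hpn => ?_⟩
  have : Fact p.Prime := ⟨hp⟩
  by_cases hpq : p = q
  · exact ZMod.hasWeightedZeroSumOn_castHom_of_dvd hpn (hpq ▸ fun i _ => hdvd i)
  rcases hp.dvd_mul.1 (h ▸ hpn) with hp₁ | hp₂
  · have hp₁' := Nat.mem_primeFactors.2 ⟨hp, hp₁, hsf₁.ne_zero⟩
    have hsum₁ := congrArg (fun v => v.1 ⟨p, hp₁'⟩) hsum
    simp only [code, Prod.fst_sum, Finset.sum_apply, Function.comp_apply] at hsum₁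
    exact ZMod.hasWeightedZeroSumOn_of_mod_three_eq_one (h1 p hp hp₁)
      (by rintro rfl; exact h7 hpn) (by rintro rfl; exact h13 hpn) (hχ p hp₁') hω hsum₁
  · have hp₂' := mem_erase.2 ⟨hpq, Nat.mem_primeFactors.2 ⟨hp, hp₂, hsf₂.ne_zero⟩⟩
    have hsum₂ := congrArg (fun v => v.2 ⟨p, hp₂'⟩) hsum
    simp only [code, Prod.snd_sum, Finset.sum_apply, Function.comp_apply] at hsum₂
    exact ZMod.hasWeightedZeroSumOn_of_mod_three_eq_two (h2 p hp hp₂)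
      (by rintro rfl; exact Nat.not_even_iff_odd.2 (hodd.of_dvd_nat hpn) even_two) hsum₂
end
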